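/- arXiv:2006.09826 — 4 statements merged into one kernel-verified Lean document; each statement's English description precedes it below -/
import Mathlib

section
/- Fix k ≥ 2, an uncountable regular cardinal λ, and a family (η_α : α < λ) of elements of (k+1)^ω satisfying: for every X ∈ [λ]^λ there exist ν ∈ (k+1)^{<ω} and α_0, …, α_k ∈ X such that ν⌢⟨i⟩ is an initial segment of η_{α_i} for each i ≤ k. Define the poset R consisting of finite partial functions p : u → ω (u ∈ [λ]^{<ω}) such that no p-homogeneous subset {α_0,…,α_k} ⊆ u admits such a ν; ordered by reverse inclusion. Then for each α < λ the set D_α = {p ∈ R : α ∈ dom(p)} is dense in R, and there is no filter G on R meeting all D_α for α < λ. -/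
/-!
Density: a condition `p` not yet defined at `β` is extended by giving `β` a colour that `p` never
uses; a homogeneous set through `β` would then be the singleton `{β}`, too small to be bad since
`k + 1 ≥ 2`.

No generic filter: a filter meeting every `D_β` colours all of `λ` with colours in `ω`, so by
regularity some colour class `X` has size `λ`. The hypothesis on `η` yields a bad `(k+1)`-tuple in
`X`, and a common extension in the filter of conditions colouring its members is homogeneous on it.
-/

open Cardinal

def DenseIn {α : Type*} (le : α → α → Prop) (D : Set α) : Prop :=
  ∀ p, ∃ d ∈ D, le d p

def IsFilterIn {α : Type*} (le : α → α → Prop) (G : Set α) : Prop :=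
  G.Nonempty ∧ (∀ p ∈ G, ∀ q, le p q → q ∈ G) ∧
    ∀ p ∈ G, ∀ q ∈ G, ∃ r ∈ G, le r p ∧ le r q

/-- `l` is an initial segment of the infinite sequence `g`. -/
def InitSeg {β : Type*} (l : List β) (g : ℕ → β) : Prop :=
  ∀ m (h : m < l.length), l.get ⟨m, h⟩ = g m

/-- There is a `p`-homogeneous set `{α_0,…,α_k} ⊆ S` together with some
`ν ∈ (k+1)^{<ω}` such that `ν⌢⟨i⟩ ⊑ η_{α_i}` for all `i ≤ k`. -/
def Bad (k : ℕ) (η : Ordinal → ℕ → Fin (k + 1))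
    (p : Ordinal → Option ℕ) (S : Set Ordinal) : Prop :=
  ∃ (ν : List (Fin (k + 1))) (α : Fin (k + 1) → Ordinal),
    Function.Injective α ∧ (∀ i, α i ∈ S) ∧ (∀ i j, p (α i) = p (α j)) ∧
    ∀ i, InitSeg (ν ++ [i]) (η (α i))

/-- Conditions of the poset `R_{K,k}`: finite partial functions from λ to ω
admitting no bad homogeneous set. -/
def Cond (k : ℕ) (lam : Cardinal) (η : Ordinal → ℕ → Fin (k + 1))
    (p : Ordinal → Option ℕ) : Prop :=
  {α | p α ≠ none}.Finite ∧ (∀ α, p α ≠ none → α < lam.ord) ∧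
    ¬ Bad k η p {α | p α ≠ none}

def rle (k : ℕ) (lam : Cardinal) (η : Ordinal → ℕ → Fin (k + 1))
    (q p : {p : Ordinal → Option ℕ // Cond k lam η p}) : Prop :=
  ∀ α n, p.1 α = some n → q.1 α = some n

theorem IsFilterIn.exists_forall_le {α ι : Type*} [Finite ι] {le : α → α → Prop} [IsTrans α le]
    {G : Set α} (hG : IsFilterIn le G) (f : ι → α) (hf : ∀ i, f i ∈ G) :
    ∃ r ∈ G, ∀ i, le r (f i) := by
  suffices h : ∀ s : Set α, s.Finite → s ⊆ G → ∃ r ∈ G, ∀ x ∈ s, le r x by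
    simpa using h (Set.range f) (Set.finite_range f) (Set.range_subset_iff.2 hf)
  intro s hs
  induction s, hs using Set.Finite.induction_on with
  | empty =>
    obtain ⟨g, hg⟩ := hG.1
    exact fun _ => ⟨g, hg, by simp⟩
  | @insert x s _ _ ih =>
    intro hsG
    obtain ⟨r, hr, hrs⟩ := ih ((Set.subset_insert x s).trans hsG)
    obtain ⟨t, ht, htx, htr⟩ := hG.2.2 x (hsG (Set.mem_insert x s)) r hr
    refine ⟨t, ht, fun y hy => ?_⟩
    rcases hy with rfl | hy
    · exact htx
    · exact _root_.trans htr (hrs y hy)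

theorem Cardinal.IsRegular.exists_mk_fiber_eq {κ : Cardinal.{u}} (hκ : κ.IsRegular)
    (hω : ℵ₀ < κ) (f : Ordinal.{u} → ℕ) :
    ∃ n, #{β | β < κ.ord ∧ f β = n} = Cardinal.lift.{u + 1} κ := by
  have hIio : #(Set.Iio κ.ord) = Cardinal.lift.{u + 1} κ := by rw [mk_Iio_ordinal, card_ord]
  obtain ⟨⟨n⟩, t, hts, hκt, hft⟩ :=
    infinite_pigeonhole_set (s := Set.Iio κ.ord) (fun β => ULift.up.{u + 1} (f β))
      (Cardinal.lift.{u + 1} κ) hIio.ge (by simpa using hω.le)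
      (by rw [hκ.lift.cof_ord]; simpa using hω)
  refine ⟨n, le_antisymm ?_ ?_⟩
  · exact hIio ▸ mk_le_mk_of_subset fun β hβ => hβ.1
  · exact hκt.trans (mk_le_mk_of_subset fun β hβ => ⟨hts hβ, congrArg ULift.down (hft hβ)⟩)

theorem exists_forall_ne_some_of_finite {α : Type*} {p : α → Option ℕ}
    (hp : {a | p a ≠ none}.Finite) : ∃ N, ∀ a, p a ≠ some N := by
  obtain ⟨N, hN⟩ := (hp.image fun a => (p a).getD 0).exists_notMem
  exact ⟨N, fun a ha => hN ⟨a, by simp [ha], by simp [ha]⟩⟩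

theorem setOf_update_some_ne_none {α β : Type*} [DecidableEq α] (p : α → Option β) (a : α)
    (b : β) : {x | Function.update p a (some b) x ≠ none} = insert a {x | p x ≠ none} := by
  ext x
  by_cases hx : x = a <;> simp [hx]

section Forcing

variable {k : ℕ} {lam : Cardinal} {η : Ordinal → ℕ → Fin (k + 1)}

instance : IsTrans _ (rle k lam η) :=
  ⟨fun _ _ _ hab hbc α n h => hab α n (hbc α n h)⟩

theorem not_bad_update_of_forall_ne_some (hk : 1 ≤ k) {p : Ordinal → Option ℕ}
    {S : Set Ordinal} {β : Ordinal} {N : ℕ} (hN : ∀ α, p α ≠ some N) (hp : ¬ Bad k η p S) :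
    ¬ Bad k η (Function.update p β (some N)) (insert β S) := by
  rintro ⟨ν, α, hinj, hαS, hhom, hseg⟩
  by_cases hβ : ∃ i, α i = β
  · obtain ⟨i, rfl⟩ := hβ
    have : Nontrivial (Fin (k + 1)) := Fin.nontrivial_iff_two_le.2 (by omega)
    obtain ⟨j, hji⟩ := exists_ne i
    have hαj : α j ≠ α i := hinj.ne hji
    have := hhom j i
    rw [Function.update_self, Function.update_of_ne hαj] at this
    exact hN _ this
  · push Not at hβ
    refine hp ⟨ν, α, hinj, fun i => (hαS i).resolve_left (hβ i), fun i j => ?_, hseg⟩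
    simpa [Function.update_of_ne (hβ i), Function.update_of_ne (hβ j)] using hhom i j

theorem Cond.update_of_forall_ne_some (hk : 1 ≤ k) {p : Ordinal → Option ℕ}
    (hp : Cond k lam η p) {β : Ordinal} (hβ : β < lam.ord) {N : ℕ} (hN : ∀ α, p α ≠ some N) :
    Cond k lam η (Function.update p β (some N)) := by
  obtain ⟨hfin, hlt, hbad⟩ := hp
  rw [Cond, setOf_update_some_ne_none]
  refine ⟨hfin.insert β, fun α hα => ?_, not_bad_update_of_forall_ne_some hk hN hbad⟩
  by_cases h : α = β
  · exact h ▸ hβ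
  · exact hlt α (by rwa [Function.update_of_ne h] at hα)

theorem denseIn_setOf_ne_none (hk : 1 ≤ k) {β : Ordinal} (hβ : β < lam.ord) :
    DenseIn (rle k lam η) {p | p.1 β ≠ none} := by
  intro p
  by_cases hpβ : p.1 β = none
  · obtain ⟨N, hN⟩ := exists_forall_ne_some_of_finite p.2.1
    refine ⟨⟨_, p.2.update_of_forall_ne_some hk hβ hN⟩, by simp, fun α n h => ?_⟩
    have hαβ : α ≠ β := by rintro rfl; simp [hpβ] at h
    simpa [Function.update_of_ne hαβ] using h
  · exact ⟨p, hpβ, fun _ _ h => h⟩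

theorem not_exists_isFilterIn_forall_ne_none {lam : Cardinal.{u}}
    {η : Ordinal.{u} → ℕ → Fin (k + 1)} (hreg : lam.IsRegular) (hunc : ℵ₀ < lam)
    (hη : ∀ X : Set Ordinal, X ⊆ Set.Iio lam.ord → #X = lift.{u + 1} lam →
      ∃ (ν : List (Fin (k + 1))) (α : Fin (k + 1) → Ordinal),
        Function.Injective α ∧ (∀ i, α i ∈ X) ∧ ∀ i, InitSeg (ν ++ [i]) (η (α i))) :
    ¬ ∃ G : Set {p : Ordinal → Option ℕ // Cond k lam η p},
        IsFilterIn (rle k lam η) G ∧ ∀ β < lam.ord, ∃ p ∈ G, p.1 β ≠ none := by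
  rintro ⟨G, hG, hmeet⟩
  obtain ⟨g, -⟩ := hG.1
  have : Nonempty {p : Ordinal → Option ℕ // Cond k lam η p} := ⟨g⟩
  simp only [ne_eq, Option.ne_none_iff_exists'] at hmeet
  choose! p hpG colour hcolour using hmeet
  obtain ⟨n, hX⟩ := hreg.exists_mk_fiber_eq hunc colour
  obtain ⟨ν, α, hinj, hαX, hseg⟩ := hη _ (fun β hβ => hβ.1) hX
  obtain ⟨r, -, hr⟩ := hG.exists_forall_le (fun i => p (α i)) fun i => hpG _ (hαX i).1
  have hrα : ∀ i, r.1 (α i) = some n := fun i =>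
    hr i _ _ ((hαX i).2 ▸ hcolour _ (hαX i).1)
  exact r.2.2.2 ⟨ν, α, hinj, fun i => by simp [hrα], fun i j => by rw [hrα, hrα], hseg⟩

end Forcing

/-- For k ≥ 2 and λ regular uncountable: given Cohen-like reals η_α witnessing
the splitting property, in the poset R_{K,k} every D_α is dense but no filter
meets all of them. -/
theorem stmt8 (k : ℕ) (hk : 2 ≤ k) (lam : Cardinal)
    (hreg : lam.IsRegular) (hunc : ℵ₀ < lam)
    (η : Ordinal → ℕ → Fin (k + 1))
    (hη : ∀ X : Set Ordinal, X ⊆ Set.Iio lam.ord → #X = Cardinal.lift.{1,0} lam →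
      ∃ (ν : List (Fin (k + 1))) (α : Fin (k + 1) → Ordinal),
        Function.Injective α ∧ (∀ i, α i ∈ X) ∧
        ∀ i, InitSeg (ν ++ [i]) (η (α i))) :
    (∀ β < lam.ord,
      DenseIn (rle k lam η) {p : {p : Ordinal → Option ℕ // Cond k lam η p} | p.1 β ≠ none}) ∧
    ¬ ∃ G : Set {p : Ordinal → Option ℕ // Cond k lam η p},
        IsFilterIn (rle k lam η) G ∧ ∀ β < lam.ord, ∃ p ∈ G, p.1 β ≠ none :=
  ⟨fun _ hβ => denseIn_setOf_ne_none (by omega) hβ,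
    not_exists_isFilterIn_forall_ne_none hreg hunc hη⟩
end

section
/- Let λ > ℵ₁ be regular and let P_cal be the poset of Definition in context. Suppose p₀, …, p_{n-1} ∈ P_cal all have the same type over (u, F), with u_{p_i} ∩ u_{p_j} = u and F_{p_i} ∩ F_{p_j} = F for all i ≠ j. Then p₀, …, p_{n-1} have a common lower bound q in P_cal, obtained by taking unions of the u's, F's, c's and d's, assigning new unique values of d on new arguments, and setting undefined values c_q({x,y}) := 0 if x, y > max(F) and 1 otherwise. Consequently P_cal has precaliber μ for every uncountable regular cardinal μ. -/
open Cardinal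

def Homog (c : Ordinal → Ordinal → Option (Fin 2)) (s : Finset Ordinal) : Prop :=
  ∀ x ∈ s, ∀ y ∈ s, x ≠ y → c x y = some 1

structure PCal (lam : Cardinal) where
  u : Finset Ordinal
  F : Finset Ordinal
  hu : ∀ x ∈ u, x < lam.ord
  hF : ∀ x ∈ F, x < lam.ord
  c : Ordinal → Ordinal → Option (Fin 2)
  d : Ordinal → Finset Ordinal → Option ℕ
  c_dom : ∀ x y, c x y ≠ none ↔ (x ∈ u ∧ y ∈ u ∧ x ≠ y)
  c_symm : ∀ x y, c x y = c y x
  d_dom : ∀ α s, d α s ≠ none ↔ (α ∈ F ∧ ∀ x ∈ s, x ∈ u ∧ x < α)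
  star : ∀ α ∈ F, ∀ s₁ s₂ : Finset Ordinal,
    (∀ x ∈ s₁, x ∈ u ∧ x < α) → (∀ x ∈ s₂, x ∈ u ∧ x < α) →
    Homog c s₁ → Homog c s₂ → d α s₁ = d α s₂ → Homog c (s₁ ∪ s₂)

def pcLe {lam : Cardinal} (q p : PCal lam) : Prop :=
  p.u ⊆ q.u ∧ p.F ⊆ q.F ∧ (∀ x y, p.c x y ≠ none → q.c x y = p.c x y) ∧
    ∀ α s, p.d α s ≠ none → q.d α s = p.d α s

/-- `p` and `q` have the same type over `(u, F)`: there is an order isomorphism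
of `u_p ∪ F_p` onto `u_q ∪ F_q` fixing `u ∪ F`, mapping `u_p` onto `u_q` and
`F_p` onto `F_q`, and commuting with the colorings `c` and `d`. -/
def SameTypeOver {lam : Cardinal} (u F : Finset Ordinal) (p q : PCal lam) : Prop :=
  u ⊆ p.u ∧ F ⊆ p.F ∧ u ⊆ q.u ∧ F ⊆ q.F ∧
  ∃ e : Ordinal → Ordinal,
    (∀ x ∈ p.u ∪ p.F, ∀ y ∈ p.u ∪ p.F, x < y → e x < e y) ∧
    p.u.image e = q.u ∧ p.F.image e = q.F ∧
    (∀ x ∈ u ∪ F, e x = x) ∧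
    (∀ x ∈ p.u, ∀ y ∈ p.u, q.c (e x) (e y) = p.c x y) ∧
    (∀ α ∈ p.F, ∀ s : Finset Ordinal, s ⊆ p.u → q.d (e α) (s.image e) = p.d α s)

/-!
Amalgamation: the union of the `p i` is a condition once all new pairs get colour `1` and new
arguments of `d` get fresh, pairwise distinct values. Old colours and values agree on overlaps
because the type isomorphisms fix the root. For `star`, equal fresh values force equal sets,
while `d_i(α, s₁) = d_j(α, s₂)` with `i ≠ j` puts `α` into the root: transporting `s₂` into `p i`
and applying `star` there colours the cross pairs that meet the root, and the other cross pairs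
are new, hence coloured `1`.

Precaliber: thinning a family of size `μ` by the Δ-system lemma (for `u` and for `F`) and by
pigeonhole on the countably many collapses leaves `μ` conditions, any finitely many of which
satisfy the amalgamation hypotheses.
-/

theorem Homog.union {c : Ordinal → Ordinal → Option (Fin 2)} {s t : Finset Ordinal}
    (hc : ∀ x y, c x y = c y x) (hs : Homog c s) (ht : Homog c t)
    (hst : ∀ x ∈ s, ∀ y ∈ t, x ≠ y → c x y = some 1) : Homog c (s ∪ t) := by
  intro x hx y hy hxy
  rcases Finset.mem_union.1 hx with hx | hx <;> rcases Finset.mem_union.1 hy with hy | hy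
  · exact hs x hx y hy hxy
  · exact hst x hx y hy hxy
  · rw [hc]
    exact hst y hy x hx hxy.symm
  · exact ht x hx y hy hxy

noncomputable section

section Rank

variable {α : Type*} [LinearOrder α]

def rankIn (W : Finset α) (x : α) : ℕ := (W.filter (· < x)).card

theorem rankIn_strictMonoOn (W : Finset α) : StrictMonoOn (rankIn W) W := by
  intro x hx y _ hxy
  refine Finset.card_lt_card (Finset.ssubset_iff_of_subset ?_ |>.2 ⟨x, ?_, ?_⟩)
  · intro z hz
    simp only [Finset.mem_filter] at hz ⊢
    exact ⟨hz.1, hz.2.trans hxy⟩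
  · simpa [hxy] using hx
  · simp

variable [Nonempty α]

/-- Sends the element of rank `k` in `V` to the element of rank `k` in `W`. -/
def rankMatch (V W : Finset α) : α → α := Function.invFunOn (rankIn W) W ∘ rankIn V

variable {V W s t : Finset α}

theorem rankMatch_eq {x y : α} (hy : y ∈ W) (h : rankIn W y = rankIn V x) :
    rankMatch V W x = y := by
  rw [rankMatch, Function.comp_apply, ← h]
  exact (rankIn_strictMonoOn W).injOn.leftInvOn_invFunOn hy

theorem rankMatch_mem (ht : t ⊆ W) (hst : s.image (rankIn V) = t.image (rankIn W))
    {x : α} (hx : x ∈ s) : rankMatch V W x ∈ t ∧ rankIn W (rankMatch V W x) = rankIn V x := by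
  have hx' := Finset.mem_image_of_mem (rankIn V) hx
  rw [hst, Finset.mem_image] at hx'
  obtain ⟨y, hy, hxy⟩ := hx'
  rw [rankMatch_eq (ht hy) hxy]
  exact ⟨hy, hxy⟩

theorem image_rankMatch (ht : t ⊆ W) (hst : s.image (rankIn V) = t.image (rankIn W)) :
    s.image (rankMatch V W) = t := by
  refine Finset.Subset.antisymm (fun z hz => ?_) (fun z hz => ?_)
  · obtain ⟨x, hx, rfl⟩ := Finset.mem_image.1 hz
    exact (rankMatch_mem ht hst hx).1
  · have hz' := Finset.mem_image_of_mem (rankIn W) hz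
    rw [← hst, Finset.mem_image] at hz'
    obtain ⟨x, hx, hxz⟩ := hz'
    exact Finset.mem_image.2 ⟨x, hx, rankMatch_eq (ht hz) hxz.symm⟩

theorem strictMonoOn_rankMatch (h : V.image (rankIn V) = W.image (rankIn W)) :
    StrictMonoOn (rankMatch V W) V := by
  intro x hx y hy hxy
  obtain ⟨hx', hrx⟩ := rankMatch_mem subset_rfl h hx
  obtain ⟨hy', hry⟩ := rankMatch_mem subset_rfl h hy
  rw [← (rankIn_strictMonoOn W).lt_iff_lt hx' hy', hrx, hry]
  exact rankIn_strictMonoOn V hx hy hxy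

end Rank

namespace PCal

variable {lam : Cardinal} {u F : Finset Ordinal}

def support (p : PCal lam) : Finset Ordinal := p.u ∪ p.F

theorem u_subset_support (p : PCal lam) : p.u ⊆ p.support := Finset.subset_union_left

theorem F_subset_support (p : PCal lam) : p.F ⊆ p.support := Finset.subset_union_right

/-- The Mostowski collapse of `p` over `(u, F)`: `support p` is collapsed onto an initial
segment of `ℕ` by `rankIn`, so that collapses range over a countable type. The ranks of the
points of `u ∪ F` are recorded individually, so that equal collapses give a map fixing them. -/
def collapse (u F : Finset Ordinal) (p : PCal lam) :
    Finset ℕ × Finset ℕ × (↥(u ∪ F) → ℕ) × Finset (ℕ × ℕ × Option (Fin 2)) ×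
      Finset (ℕ × Finset ℕ × Option ℕ) :=
  (p.u.image (rankIn p.support), p.F.image (rankIn p.support), fun x => rankIn p.support x,
    (p.u ×ˢ p.u).image fun xy => (rankIn p.support xy.1, rankIn p.support xy.2, p.c xy.1 xy.2),
    (p.F ×ˢ p.u.powerset).image fun αs =>
      (rankIn p.support αs.1, αs.2.image (rankIn p.support), p.d αs.1 αs.2))

theorem sameTypeOver_of_collapse_eq {p q : PCal lam} (hup : u ⊆ p.u) (hFp : F ⊆ p.F)
    (huq : u ⊆ q.u) (hFq : F ⊆ q.F) (h : p.collapse u F = q.collapse u F) :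
    SameTypeOver u F p q := by
  simp only [collapse, Prod.mk.injEq] at h
  obtain ⟨hU, hF, hroot, hc, hd⟩ := h
  have hW : p.support.image (rankIn p.support) = q.support.image (rankIn q.support) := by
    calc _ = p.u.image (rankIn p.support) ∪ p.F.image (rankIn p.support) := Finset.image_union _ _
      _ = _ := by rw [hU, hF]; exact (Finset.image_union _ _).symm
  refine ⟨hup, hFp, huq, hFq, rankMatch p.support q.support,
    fun x hx y hy => strictMonoOn_rankMatch hW hx hy,
    image_rankMatch q.u_subset_support hU, image_rankMatch q.F_subset_support hF,
    fun x hx => rankMatch_eq (Finset.union_subset_union huq hFq hx) (congrFun hroot ⟨x, hx⟩).symm,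
    fun x hx y hy => ?_, fun α hα s hs => ?_⟩
  · obtain ⟨⟨x', y'⟩, hxy', hc'⟩ := Finset.mem_image.1 (hc ▸ Finset.mem_image_of_mem _
      (a := (x, y)) (Finset.mem_product.2 ⟨hx, hy⟩))
    simp only [Prod.mk.injEq] at hc'
    obtain ⟨hx', hy'⟩ := Finset.mem_product.1 hxy'
    rw [rankMatch_eq (q.u_subset_support hx') hc'.1,
      rankMatch_eq (q.u_subset_support hy') hc'.2.1, hc'.2.2]
  · obtain ⟨⟨β, t⟩, hβt, hd'⟩ := Finset.mem_image.1 (hd ▸ Finset.mem_image_of_mem _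
      (a := (α, s)) (Finset.mem_product.2 ⟨hα, Finset.mem_powerset.2 hs⟩))
    simp only [Prod.mk.injEq] at hd'
    obtain ⟨hβ, ht⟩ := Finset.mem_product.1 hβt
    rw [rankMatch_eq (q.F_subset_support hβ) hd'.1,
      image_rankMatch ((Finset.mem_powerset.1 ht).trans q.u_subset_support) hd'.2.1.symm,
      hd'.2.2]

end PCal

namespace SameTypeOver

variable {lam : Cardinal} {u F : Finset Ordinal} {p q : PCal lam}

theorem c_eq (h : SameTypeOver u F p q) {x y : Ordinal} (hx : x ∈ u) (hy : y ∈ u) :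
    q.c x y = p.c x y := by
  obtain ⟨hup, -, -, -, e, -, -, -, hfix, hc, -⟩ := h
  have := hc x (hup hx) y (hup hy)
  rwa [hfix x (Finset.mem_union_left _ hx), hfix y (Finset.mem_union_left _ hy)] at this

theorem d_eq (h : SameTypeOver u F p q) {α : Ordinal} {s : Finset Ordinal} (hα : α ∈ F)
    (hs : s ⊆ u) : q.d α s = p.d α s := by
  obtain ⟨hup, hFp, -, -, e, -, -, -, hfix, -, hd⟩ := h
  have := hd α (hFp hα) s (hs.trans hup)
  rwa [hfix α (Finset.mem_union_right _ hα),
    (Finset.image_congr fun x hx => hfix x (Finset.mem_union_left _ (hs hx))).trans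
      Finset.image_id] at this

end SameTypeOver

structure SameTypeDeltaSystem {lam : Cardinal} {ι : Type*} (u F : Finset Ordinal)
    (p : ι → PCal lam) : Prop where
  sameType : ∀ i j, SameTypeOver u F (p i) (p j)
  inter_u : ∀ i j, i ≠ j → (p i).u ∩ (p j).u = u
  inter_F : ∀ i j, i ≠ j → (p i).F ∩ (p j).F = F

section Amalgamation

variable {lam : Cardinal} {ι : Type*} [Fintype ι] (p : ι → PCal lam)

def amalgU : Finset Ordinal := Finset.univ.biUnion fun i => (p i).u

def amalgF : Finset Ordinal := Finset.univ.biUnion fun i => (p i).F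

def dBound : ℕ :=
  Finset.univ.sup fun i => ((p i).F ×ˢ (p i).u.powerset).sup fun αs => ((p i).d αs.1 αs.2).getD 0

def freshD (α : Ordinal) (s : Finset Ordinal) : ℕ :=
  dBound p + 1 + (amalgF p ×ˢ (amalgU p).powerset).toList.idxOf (α, s)

open Classical in
def amalgC (x y : Ordinal) : Option (Fin 2) :=
  if h : ∃ i, (p i).c x y ≠ none then (p h.choose).c x y
  else if x ∈ amalgU p ∧ y ∈ amalgU p ∧ x ≠ y then some 1 else none

open Classical in
def amalgD (α : Ordinal) (s : Finset Ordinal) : Option ℕ :=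
  if h : ∃ i, (p i).d α s ≠ none then (p h.choose).d α s
  else if α ∈ amalgF p ∧ ∀ x ∈ s, x ∈ amalgU p ∧ x < α then some (freshD p α s) else none

variable {p}

theorem mem_amalgU {x : Ordinal} : x ∈ amalgU p ↔ ∃ i, x ∈ (p i).u := by
  simp [amalgU]

theorem mem_amalgF {x : Ordinal} : x ∈ amalgF p ↔ ∃ i, x ∈ (p i).F := by
  simp [amalgF]

theorem amalgC_dom (x y : Ordinal) :
    amalgC p x y ≠ none ↔ x ∈ amalgU p ∧ y ∈ amalgU p ∧ x ≠ y := by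
  by_cases hex : ∃ i, (p i).c x y ≠ none
  · rw [amalgC, dif_pos hex]
    obtain ⟨hx, hy, hxy⟩ := ((p _).c_dom x y).1 hex.choose_spec
    exact iff_of_true hex.choose_spec ⟨mem_amalgU.2 ⟨_, hx⟩, mem_amalgU.2 ⟨_, hy⟩, hxy⟩
  · rw [amalgC, dif_neg hex]
    split_ifs with h <;> simpa using h

theorem amalgD_dom (α : Ordinal) (s : Finset Ordinal) :
    amalgD p α s ≠ none ↔ α ∈ amalgF p ∧ ∀ x ∈ s, x ∈ amalgU p ∧ x < α := by
  by_cases hex : ∃ i, (p i).d α s ≠ none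
  · rw [amalgD, dif_pos hex]
    obtain ⟨hα, hs⟩ := ((p _).d_dom α s).1 hex.choose_spec
    exact iff_of_true hex.choose_spec
      ⟨mem_amalgF.2 ⟨_, hα⟩, fun x hx => ⟨mem_amalgU.2 ⟨_, (hs x hx).1⟩, (hs x hx).2⟩⟩
  · rw [amalgD, dif_neg hex]
    split_ifs with h <;> simpa using h

theorem amalgC_of_forall_eq_none {x y : Ordinal} (hnone : ∀ i, (p i).c x y = none)
    (hx : x ∈ amalgU p) (hy : y ∈ amalgU p) (hxy : x ≠ y) : amalgC p x y = some 1 := by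
  rw [amalgC, dif_neg (by simpa using hnone), if_pos ⟨hx, hy, hxy⟩]

theorem amalgD_of_forall_eq_none {α : Ordinal} {s : Finset Ordinal}
    (hnone : ∀ i, (p i).d α s = none) (hα : α ∈ amalgF p) (hs : ∀ x ∈ s, x ∈ amalgU p ∧ x < α) :
    amalgD p α s = some (freshD p α s) := by
  rw [amalgD, dif_neg (by simpa using hnone), if_pos ⟨hα, hs⟩]

theorem le_dBound {i : ι} {α : Ordinal} {s : Finset Ordinal} {m : ℕ} (hd : (p i).d α s = some m) :
    m ≤ dBound p := by
  obtain ⟨hα, hs⟩ := ((p i).d_dom α s).1 (by simp [hd])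
  have hαs : (α, s) ∈ (p i).F ×ˢ (p i).u.powerset :=
    Finset.mem_product.2 ⟨hα, Finset.mem_powerset.2 fun x hx => (hs x hx).1⟩
  have := (Finset.le_sup (f := fun αs => ((p i).d αs.1 αs.2).getD 0) hαs).trans
    (Finset.le_sup (f := fun i => ((p i).F ×ˢ (p i).u.powerset).sup
      fun αs => ((p i).d αs.1 αs.2).getD 0) (Finset.mem_univ i))
  simpa [dBound, hd] using this

theorem eq_of_freshD_eq {α : Ordinal} {s₁ s₂ : Finset Ordinal} (hα : α ∈ amalgF p)
    (hs₁ : ∀ x ∈ s₁, x ∈ amalgU p ∧ x < α) (h : freshD p α s₁ = freshD p α s₂) : s₁ = s₂ := by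
  have hmem : (α, s₁) ∈ (amalgF p ×ˢ (amalgU p).powerset).toList :=
    Finset.mem_toList.2 (Finset.mem_product.2 ⟨hα, Finset.mem_powerset.2 fun x hx => (hs₁ x hx).1⟩)
  rw [freshD, freshD, Nat.add_left_cancel_iff, List.idxOf_inj hmem] at h
  exact (Prod.mk.inj h).2

end Amalgamation

namespace SameTypeDeltaSystem

variable {lam : Cardinal} {ι : Type*} {p : ι → PCal lam} {u F : Finset Ordinal}
  (h : SameTypeDeltaSystem u F p)
include h

theorem c_eq {i j : ι} {x y : Ordinal} (hi : (p i).c x y ≠ none) (hj : (p j).c x y ≠ none) :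
    (p i).c x y = (p j).c x y := by
  rcases eq_or_ne i j with rfl | hij
  · rfl
  obtain ⟨hxi, hyi, -⟩ := ((p i).c_dom x y).1 hi
  obtain ⟨hxj, hyj, -⟩ := ((p j).c_dom x y).1 hj
  exact ((h.sameType i j).c_eq (h.inter_u i j hij ▸ Finset.mem_inter.2 ⟨hxi, hxj⟩)
    (h.inter_u i j hij ▸ Finset.mem_inter.2 ⟨hyi, hyj⟩)).symm

theorem d_eq {i j : ι} {α : Ordinal} {s : Finset Ordinal} (hi : (p i).d α s ≠ none)
    (hj : (p j).d α s ≠ none) : (p i).d α s = (p j).d α s := by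
  rcases eq_or_ne i j with rfl | hij
  · rfl
  obtain ⟨hαi, hsi⟩ := ((p i).d_dom α s).1 hi
  obtain ⟨hαj, hsj⟩ := ((p j).d_dom α s).1 hj
  exact ((h.sameType i j).d_eq (h.inter_F i j hij ▸ Finset.mem_inter.2 ⟨hαi, hαj⟩)
    fun x hx => h.inter_u i j hij ▸ Finset.mem_inter.2 ⟨(hsi x hx).1, (hsj x hx).1⟩).symm

variable [Fintype ι]

theorem amalgC_eq {i : ι} {x y : Ordinal} (hi : (p i).c x y ≠ none) :
    amalgC p x y = (p i).c x y := by
  have hex : ∃ j, (p j).c x y ≠ none := ⟨i, hi⟩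
  rw [amalgC, dif_pos hex]
  exact h.c_eq hex.choose_spec hi

theorem amalgD_eq {i : ι} {α : Ordinal} {s : Finset Ordinal} (hi : (p i).d α s ≠ none) :
    amalgD p α s = (p i).d α s := by
  have hex : ∃ j, (p j).d α s ≠ none := ⟨i, hi⟩
  rw [amalgD, dif_pos hex]
  exact h.d_eq hex.choose_spec hi

theorem amalgC_symm (x y : Ordinal) : amalgC p x y = amalgC p y x := by
  by_cases hex : ∃ i, (p i).c x y ≠ none
  · obtain ⟨i, hi⟩ := hex
    rw [h.amalgC_eq hi, h.amalgC_eq (i := i) (by rwa [(p i).c_symm]), (p i).c_symm]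
  · have hex' : ¬∃ i, (p i).c y x ≠ none := by simpa only [(p _).c_symm y x] using hex
    rw [amalgC, amalgC, dif_neg hex, dif_neg hex']
    exact if_congr ⟨fun ⟨hx, hy, hxy⟩ => ⟨hy, hx, hxy.symm⟩,
      fun ⟨hy, hx, hyx⟩ => ⟨hx, hy, hyx.symm⟩⟩ rfl rfl

theorem homog_amalgC_iff (i : ι) {s : Finset Ordinal} (hs : s ⊆ (p i).u) :
    Homog (amalgC p) s ↔ Homog (p i).c s := by
  refine forall₂_congr fun x hx => forall₂_congr fun y hy => forall_congr' fun hxy => ?_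
  rw [h.amalgC_eq (((p i).c_dom x y).2 ⟨hs hx, hs hy, hxy⟩)]

theorem eq_of_amalgD_eq_fresh {α : Ordinal} {s₁ s₂ : Finset Ordinal}
    (hfresh : ∀ i, (p i).d α s₁ = none) (hα : α ∈ amalgF p)
    (hs₁ : ∀ x ∈ s₁, x ∈ amalgU p ∧ x < α) (hs₂ : ∀ x ∈ s₂, x ∈ amalgU p ∧ x < α)
    (hd : amalgD p α s₁ = amalgD p α s₂) : s₁ = s₂ := by
  rw [amalgD_of_forall_eq_none hfresh hα hs₁] at hd
  by_cases hfresh₂ : ∀ i, (p i).d α s₂ = none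
  · rw [amalgD_of_forall_eq_none hfresh₂ hα hs₂, Option.some_inj] at hd
    exact eq_of_freshD_eq hα hs₁ hd
  · obtain ⟨i, hi⟩ := not_forall.1 hfresh₂
    have := le_dBound (h.amalgD_eq hi ▸ hd).symm
    simp only [freshD] at this
    omega


theorem homog_union_of_ne {i j : ι} (hij : i ≠ j) {α : Ordinal} {s₁ s₂ : Finset Ordinal}
    (hi : (p i).d α s₁ ≠ none) (hj : (p j).d α s₂ ≠ none) (hd : (p i).d α s₁ = (p j).d α s₂)
    (h₁ : Homog (amalgC p) s₁) (h₂ : Homog (amalgC p) s₂) : Homog (amalgC p) (s₁ ∪ s₂) := by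
  obtain ⟨hαi, hs₁⟩ := ((p i).d_dom α s₁).1 hi
  obtain ⟨hαj, hs₂⟩ := ((p j).d_dom α s₂).1 hj
  have hs₁u : s₁ ⊆ (p i).u := fun x hx => (hs₁ x hx).1
  have hs₂u : s₂ ⊆ (p j).u := fun x hx => (hs₂ x hx).1
  obtain ⟨huj, -, hui, -, e, he_mono, he_u, -, he_fix, he_c, he_d⟩ := h.sameType j i
  have he_inj : Set.InjOn e (p j).support := (StrictMonoOn.injOn fun x hx y hy => he_mono x hx y hy)
  have heα : e α = α := he_fix α (Finset.mem_union_right _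
    (h.inter_F i j hij ▸ Finset.mem_inter.2 ⟨hαi, hαj⟩))
  have hs₂' : ∀ y ∈ s₂.image e, y ∈ (p i).u ∧ y < α := by
    simp only [Finset.mem_image, forall_exists_index, and_imp, forall_apply_eq_imp_iff₂]
    exact fun y hy => ⟨he_u ▸ Finset.mem_image_of_mem e (hs₂u hy), heα ▸ he_mono y
      ((p j).u_subset_support (hs₂u hy)) α ((p j).F_subset_support hαj) (hs₂ y hy).2⟩
  have hhom₂' : Homog (p i).c (s₂.image e) := by
    simp only [Homog, Finset.mem_image, forall_exists_index, and_imp, forall_apply_eq_imp_iff₂]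
    intro x hx y hy hxy
    rw [he_c x (hs₂u hx) y (hs₂u hy)]
    exact (h.homog_amalgC_iff j hs₂u).1 h₂ x hx y hy (ne_of_apply_ne e hxy)
  have hhom := (p i).star α hαi s₁ _ hs₁ hs₂' ((h.homog_amalgC_iff i hs₁u).1 h₁) hhom₂'
    (by rw [hd, ← he_d α hαj s₂ hs₂u, heα])
  refine h₁.union h.amalgC_symm h₂ fun x hx y hy hxy => ?_
  by_cases hyu : y ∈ u
  · rw [h.amalgC_eq (((p i).c_dom x y).2 ⟨hs₁u hx, hui hyu, hxy⟩)]
    refine hhom x (Finset.mem_union_left _ hx) y (Finset.mem_union_right _ ?_) hxy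
    exact he_fix y (Finset.mem_union_left _ hyu) ▸ Finset.mem_image_of_mem e hy
  by_cases hxu : x ∈ u
  · have hex : e x = x := he_fix x (Finset.mem_union_left _ hxu)
    rw [h.amalgC_eq (((p j).c_dom x y).2 ⟨huj hxu, hs₂u hy, hxy⟩), ← he_c x (huj hxu) y (hs₂u hy),
      hex]
    refine hhom x (Finset.mem_union_left _ hx) (e y)
      (Finset.mem_union_right _ (Finset.mem_image_of_mem e hy)) fun hxey => hxy ?_
    exact he_inj ((p j).u_subset_support (huj hxu)) ((p j).u_subset_support (hs₂u hy))
      (hex.trans hxey)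
  refine amalgC_of_forall_eq_none (fun k => ?_) (mem_amalgU.2 ⟨i, hs₁u hx⟩)
    (mem_amalgU.2 ⟨j, hs₂u hy⟩) hxy
  by_contra hk
  obtain ⟨hxk, hyk, -⟩ := ((p k).c_dom x y).1 hk
  rcases eq_or_ne k i with rfl | hki
  · exact hyu (h.inter_u k j hij ▸ Finset.mem_inter.2 ⟨hyk, hs₂u hy⟩)
  · exact hxu (h.inter_u k i hki ▸ Finset.mem_inter.2 ⟨hxk, hs₁u hx⟩)

theorem homog_union_of_d_eq {i j : ι} {α : Ordinal} {s₁ s₂ : Finset Ordinal}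
    (hi : (p i).d α s₁ ≠ none) (hj : (p j).d α s₂ ≠ none) (hd : (p i).d α s₁ = (p j).d α s₂)
    (h₁ : Homog (amalgC p) s₁) (h₂ : Homog (amalgC p) s₂) : Homog (amalgC p) (s₁ ∪ s₂) := by
  rcases eq_or_ne i j with rfl | hij
  · obtain ⟨hα, hs₁⟩ := ((p i).d_dom α s₁).1 hi
    obtain ⟨-, hs₂⟩ := ((p i).d_dom α s₂).1 hj
    have hsub : ∀ s, (∀ x ∈ s, x ∈ (p i).u ∧ x < α) → s ⊆ (p i).u := fun s hs x hx => (hs x hx).1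
    rw [h.homog_amalgC_iff i (Finset.union_subset (hsub _ hs₁) (hsub _ hs₂))]
    exact (p i).star α hα s₁ s₂ hs₁ hs₂ ((h.homog_amalgC_iff i (hsub _ hs₁)).1 h₁)
      ((h.homog_amalgC_iff i (hsub _ hs₂)).1 h₂) hd
  · exact h.homog_union_of_ne hij hi hj hd h₁ h₂

theorem amalg_star {α : Ordinal} {s₁ s₂ : Finset Ordinal} (hα : α ∈ amalgF p)
    (hs₁ : ∀ x ∈ s₁, x ∈ amalgU p ∧ x < α) (hs₂ : ∀ x ∈ s₂, x ∈ amalgU p ∧ x < α)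
    (h₁ : Homog (amalgC p) s₁) (h₂ : Homog (amalgC p) s₂) (hd : amalgD p α s₁ = amalgD p α s₂) :
    Homog (amalgC p) (s₁ ∪ s₂) := by
  by_cases hfresh₁ : ∀ i, (p i).d α s₁ = none
  · rwa [h.eq_of_amalgD_eq_fresh hfresh₁ hα hs₁ hs₂ hd, Finset.union_self]
  by_cases hfresh₂ : ∀ i, (p i).d α s₂ = none
  · rwa [h.eq_of_amalgD_eq_fresh hfresh₂ hα hs₂ hs₁ hd.symm, Finset.union_self]
  obtain ⟨i, hi⟩ := not_forall.1 hfresh₁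
  obtain ⟨j, hj⟩ := not_forall.1 hfresh₂
  rw [h.amalgD_eq hi, h.amalgD_eq hj] at hd
  exact h.homog_union_of_d_eq hi hj hd h₁ h₂

theorem exists_lowerBound : ∃ q : PCal lam, ∀ i, pcLe q (p i) := by
  refine ⟨⟨amalgU p, amalgF p, ?_, ?_, amalgC p, amalgD p, amalgC_dom, h.amalgC_symm, amalgD_dom,
    fun α hα s₁ s₂ hs₁ hs₂ => h.amalg_star hα hs₁ hs₂⟩, fun i => ⟨?_, ?_, ?_, ?_⟩⟩
  · simp only [mem_amalgU, forall_exists_index]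
    exact fun x i hx => (p i).hu x hx
  · simp only [mem_amalgF, forall_exists_index]
    exact fun x i hx => (p i).hF x hx
  · exact fun x hx => mem_amalgU.2 ⟨i, hx⟩
  · exact fun x hx => mem_amalgF.2 ⟨i, hx⟩
  · exact fun x y hi => h.amalgC_eq hi
  · exact fun α s hi => h.amalgD_eq hi

end SameTypeDeltaSystem

end

section DeltaSystem

universe v

variable {ι α : Type v} {μ : Cardinal.{v}}

theorem exists_subset_mk_eq_forall_eq (hμ : μ.IsRegular) (hα : #α < μ) {A : Set ι}
    (hA : #A = μ) (f : ι → α) : ∃ B ⊆ A, #B = μ ∧ ∃ a, ∀ i ∈ B, f i = a := by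
  obtain ⟨a, B, hBA, hμB, hB⟩ := infinite_pigeonhole_set (fun i : A => f i) μ hA.ge hμ.aleph0_le
    (by rwa [hμ.cof_ord])
  exact ⟨B, hBA, le_antisymm (hA ▸ mk_le_mk_of_subset hBA) hμB, a, fun i hi => hB hi⟩

/-- A maximal disjoint subfamily `M` has size `μ`: otherwise fewer than `μ` members of `A` meet
`⋃ i ∈ M, f i`, and any other member could be added to `M`. -/
theorem exists_pairwiseDisjoint_subset (hμ : μ.IsRegular) (h0 : ℵ₀ < μ) (f : ι → Finset α)
    {A : Set ι} (hA : #A = μ) (hne : ∀ i ∈ A, (f i).Nonempty)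
    (hsmall : ∀ x, #{i ∈ A | x ∈ f i} < μ) : ∃ B ⊆ A, #B = μ ∧ B.PairwiseDisjoint f := by
  obtain ⟨M, -, hM⟩ := zorn_subset_nonempty {M | M ⊆ A ∧ M.PairwiseDisjoint f}
    (fun c hc hchain _ => ⟨⋃₀ c, ⟨Set.sUnion_subset fun M hM => (hc hM).1,
      (Set.pairwiseDisjoint_sUnion hchain.directedOn).2 fun M hM => (hc hM).2⟩,
      fun _ => Set.subset_sUnion_of_mem⟩) ∅ ⟨Set.empty_subset A, Set.pairwiseDisjoint_empty⟩
  refine ⟨M, hM.prop.1, le_antisymm (hA ▸ mk_le_mk_of_subset hM.prop.1) ?_, hM.prop.2⟩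
  by_contra! hMμ
  have hU : #(⋃ i ∈ M, (f i : Set α)) < μ :=
    (card_biUnion_lt_iff_forall_of_isRegular hμ hMμ).2 fun i _ =>
      (finset_card_lt_aleph0 (f i)).trans h0
  have hbad : #(⋃ x ∈ ⋃ i ∈ M, (f i : Set α), {i ∈ A | x ∈ f i}) < μ :=
    (card_biUnion_lt_iff_forall_of_isRegular hμ hU).2 fun x _ => hsmall x
  obtain ⟨j, hjA, hj⟩ :=
    Set.not_subset.1 fun hsub => ((mk_le_mk_of_subset hsub).trans_lt hbad).ne hA
  have hdisj : ∀ i ∈ M, i ≠ j → Disjoint (f j) (f i) := fun i hi _ =>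
    Finset.disjoint_left.2 fun x hxj hxi => hj (Set.mem_biUnion (Set.mem_biUnion hi hxi) ⟨hjA, hxj⟩)
  have hjM : j ∉ M := fun hjM =>
    have ⟨x, hx⟩ := hne j hjA
    hj (Set.mem_biUnion (Set.mem_biUnion hjM hx) ⟨hjA, hx⟩)
  exact hjM (hM.mem_of_prop_insert ⟨Set.insert_subset hjA hM.prop.1,
    hM.prop.2.insert fun i hi hji => hdisj i hi hji.symm⟩)

theorem exists_deltaSystem_of_card_eq [DecidableEq α] (hμ : μ.IsRegular) (h0 : ℵ₀ < μ) (n : ℕ) :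
    ∀ (f : ι → Finset α) {A : Set ι}, #A = μ → (∀ i ∈ A, (f i).card = n) →
      ∃ B ⊆ A, #B = μ ∧ ∃ r, (∀ i ∈ B, r ⊆ f i) ∧ B.Pairwise fun i j => f i ∩ f j = r := by
  induction n with
  | zero =>
    intro f A hA hcard
    simp only [Finset.card_eq_zero] at hcard
    exact ⟨A, subset_rfl, hA, ∅, fun i hi => (hcard i hi).symm.subset,
      fun i hi j _ _ => by simp [hcard i hi]⟩
  | succ n ih =>
    intro f A hA hcard
    by_cases hbig : ∃ x, μ ≤ #{i ∈ A | x ∈ f i}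
    · obtain ⟨x, hx⟩ := hbig
      obtain ⟨B, hB, hBμ, r, hr, hpair⟩ := ih (fun i => (f i).erase x)
        (le_antisymm (hA ▸ mk_le_mk_of_subset (Set.sep_subset _ _)) hx)
        fun i hi => by rw [Finset.card_erase_of_mem hi.2, hcard i hi.1, Nat.add_sub_cancel]
      refine ⟨B, hB.trans (Set.sep_subset _ _), hBμ, insert x r,
        fun i hi => Finset.insert_subset (hB hi).2 ((hr i hi).trans (Finset.erase_subset _ _)),
        fun i hi j hj hij => ?_⟩
      rw [← hpair hi hj hij, Finset.erase_inter, Finset.inter_erase, Finset.erase_idem,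
        Finset.insert_erase (Finset.mem_inter.2 ⟨(hB hi).2, (hB hj).2⟩)]
    · obtain ⟨B, hB, hBμ, hdisj⟩ := exists_pairwiseDisjoint_subset hμ h0 f hA
        (fun i hi => Finset.card_pos.1 (by rw [hcard i hi]; exact n.succ_pos)) (by simpa using hbig)
      exact ⟨B, hB, hBμ, ∅, fun _ _ => Finset.empty_subset _,
        fun i hi j hj hij => Finset.disjoint_iff_inter_eq_empty.1 (hdisj hi hj hij)⟩

theorem exists_deltaSystem [DecidableEq α] (hμ : μ.IsRegular) (h0 : ℵ₀ < μ) (f : ι → Finset α)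
    {A : Set ι} (hA : #A = μ) :
    ∃ B ⊆ A, #B = μ ∧ ∃ r, (∀ i ∈ B, r ⊆ f i) ∧ B.Pairwise fun i j => f i ∩ f j = r := by
  obtain ⟨A', hA', hA'μ, n, hn⟩ := exists_subset_mk_eq_forall_eq hμ
    (mk_le_aleph0.trans_lt h0) hA fun i => ULift.up.{v} (f i).card
  obtain ⟨B, hB, hBμ, hr⟩ :=
    exists_deltaSystem_of_card_eq hμ h0 n.down f hA'μ fun i hi => congrArg ULift.down (hn i hi)
  exact ⟨B, hB.trans hA', hBμ, hr⟩

end DeltaSystem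

theorem PCal.exists_centered_subset {lam : Cardinal} {μ : Cardinal} (hμ : μ.IsRegular)
    (h0 : ℵ₀ < μ) {A : Set (PCal lam)} (hA : #A = μ) :
    ∃ B ⊆ A, #B = μ ∧ ∀ s : Finset (PCal lam), ↑s ⊆ B → ∃ q, ∀ b ∈ s, pcLe q b := by
  obtain ⟨B₁, hB₁, hB₁μ, u, hu, hpu⟩ := exists_deltaSystem hμ h0 PCal.u hA
  obtain ⟨B₂, hB₂, hB₂μ, F, hF, hpF⟩ := exists_deltaSystem hμ h0 PCal.F hB₁μ
  obtain ⟨B, hB, hBμ, τ, hτ⟩ :=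
    exists_subset_mk_eq_forall_eq hμ (mk_le_aleph0.trans_lt h0) hB₂μ (PCal.collapse u F)
  refine ⟨B, hB.trans (hB₂.trans hB₁), hBμ, fun s hs => ?_⟩
  have hB₂s : ∀ b ∈ s, b ∈ B₂ := fun b hb => hB (hs hb)
  have hB₁s : ∀ b ∈ s, b ∈ B₁ := fun b hb => hB₂ (hB₂s b hb)
  have hδ : SameTypeDeltaSystem u F fun b : s => b.1 :=
    ⟨fun a b => PCal.sameTypeOver_of_collapse_eq (hu a (hB₁s a a.2)) (hF a (hB₂s a a.2))
        (hu b (hB₁s b b.2)) (hF b (hB₂s b b.2)) ((hτ a (hs a.2)).trans (hτ b (hs b.2)).symm),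
      fun a b hab => hpu (hB₁s a a.2) (hB₁s b b.2) (Subtype.coe_injective.ne hab),
      fun a b hab => hpF (hB₂s a a.2) (hB₂s b b.2) (Subtype.coe_injective.ne hab)⟩
  obtain ⟨q, hq⟩ := hδ.exists_lowerBound
  exact ⟨q, fun b hb => hq ⟨b, hb⟩⟩

theorem stmt11_general (lam : Cardinal) :
    (∀ (n : ℕ) (p : Fin n → PCal lam) (u F : Finset Ordinal),
      (∀ i j, SameTypeOver u F (p i) (p j)) →
      (∀ i j, i ≠ j → (p i).u ∩ (p j).u = u) →
      (∀ i j, i ≠ j → (p i).F ∩ (p j).F = F) →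
      ∃ q : PCal lam, ∀ i, pcLe q (p i)) ∧
    (∀ mu : Cardinal, mu.IsRegular → ℵ₀ < mu →
      ∀ A : Set (PCal lam), #A = Cardinal.lift.{1,0} mu →
        ∃ B ⊆ A, #B = Cardinal.lift.{1,0} mu ∧
          ∀ s : Finset (PCal lam), ↑s ⊆ B → ∃ q, ∀ b ∈ s, pcLe q b) :=
  ⟨fun _ _ _ _ hst hu hF => SameTypeDeltaSystem.exists_lowerBound ⟨hst, hu, hF⟩,
    fun _ hmu h0 _ hA => PCal.exists_centered_subset hmu.lift (by simpa using h0) hA⟩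

/-- Amalgamation of finitely many conditions of the same type over their root,
and consequently: `P_cal` has precaliber μ for every uncountable regular μ. -/
theorem stmt11 (lam : Cardinal) (hreg : lam.IsRegular)
    (hlam : Cardinal.aleph 1 < lam) :
    (∀ (n : ℕ) (p : Fin n → PCal lam) (u F : Finset Ordinal),
      (∀ i j, SameTypeOver u F (p i) (p j)) →
      (∀ i j, i ≠ j → (p i).u ∩ (p j).u = u) →
      (∀ i j, i ≠ j → (p i).F ∩ (p j).F = F) →
      ∃ q : PCal lam, ∀ i, pcLe q (p i)) ∧
    (∀ mu : Cardinal, mu.IsRegular → ℵ₀ < mu →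
      ∀ A : Set (PCal lam), #A = Cardinal.lift.{1,0} mu →
        ∃ B ⊆ A, #B = Cardinal.lift.{1,0} mu ∧
          ∀ s : Finset (PCal lam), ↑s ⊆ B → ∃ q, ∀ b ∈ s, pcLe q b) :=
  stmt11_general lam
end

section
/- Let ξ be a regular uncountable cardinal and suppose 𝔭 ≥ ξ (the pseudo-intersection number is at least ξ). Then there is an embedding F from the tree (ξ^{<ξ}, ⊊) into ([ω]^{ℵ₀}, ⊋*) preserving the strict order and incompatibility: if s ⊊ t then F(t) ⊊* F(s) (i.e., F(t) ⊆* F(s) and not F(s) ⊆* F(t)), and if s, t are incomparable in ξ^{<ξ} then F(s) ∩ F(t) is finite. -/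
open Cardinal

/-- `a ⊆* b`: `a` is almost contained in `b`. -/
def AlmostSub (a b : Set ℕ) : Prop := (a \ b).Finite

/-- The pseudo-intersection number 𝔭: the least size of a family of subsets of
ω with the strong finite intersection property (a base of a free filter) and no
infinite pseudo-intersection. -/
noncomputable def pNum : Cardinal :=
  sInf {c | ∃ B : Set (Set ℕ), #B = c ∧
    (∀ s : Finset (Set ℕ), ↑s ⊆ B → (⋂ a ∈ s, a).Infinite) ∧
    ¬ ∃ x : Set ℕ, x.Infinite ∧ ∀ a ∈ B, AlmostSub x a}

/-- A sequence of ordinals below ξ of length < ξ (an element of ξ^{<ξ}). -/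
structure XSeq (ξ : Cardinal) where
  len : Ordinal
  len_lt : len < ξ.ord
  f : Ordinal → Ordinal
  f_lt : ∀ β < len, f β < ξ.ord

/-- `s` is an initial segment of `t` (i.e. `s ⊆ t` in the tree ξ^{<ξ}). -/
def seqExt {ξ : Cardinal} (s t : XSeq ξ) : Prop :=
  s.len ≤ t.len ∧ ∀ β < s.len, t.f β = s.f β

/-!
Along each branch `f` of `ξ^{<ξ}` build a ⊆*-decreasing tower of infinite sets by recursion on the
length: at a successor step `β + 1` move the set `A (f β)` of an almost disjoint family of infinite,
coinfinite sets into the current set through its increasing enumeration, and at a limit step of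
length `δ < ξ ≤ 𝔭` take a pseudo-intersection of the tower so far. Two incomparable sequences
first differ at some `β`, where their towers continue by almost disjoint sets; everything later is
almost contained in those. The family `A` exists because `ξ ≤ 𝔭 ≤ 𝔠`.
-/

open Set

namespace AlmostSub

variable {a b c d : Set ℕ}

theorem of_subset (h : a ⊆ b) : AlmostSub a b := by
  simp [AlmostSub, sdiff_eq_empty.mpr h]

theorem refl (a : Set ℕ) : AlmostSub a a := of_subset subset_rfl

theorem trans (hab : AlmostSub a b) (hbc : AlmostSub b c) : AlmostSub a c :=
  (hab.union hbc).subset fun n hn => by by_cases n ∈ b <;> simp_all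

theorem infinite (hab : AlmostSub a b) (ha : a.Infinite) : b.Infinite :=
  fun hb => ha ((hab.union hb).subset fun n _ => by by_cases n ∈ b <;> simp_all)

theorem biInter_finset {s : Finset (Set ℕ)} (h : ∀ b ∈ s, AlmostSub a b) :
    AlmostSub a (⋂ b ∈ s, b) := by
  simp only [AlmostSub, sdiff_iInter]
  exact s.finite_toSet.biUnion h

theorem inter_finite (hac : AlmostSub a c) (hbd : AlmostSub b d) (hcd : (c ∩ d).Finite) :
    (a ∩ b).Finite :=
  ((hac.union hbd).union hcd).subset fun n hn => by
    by_cases n ∈ c <;> by_cases n ∈ d <;> simp_all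

end AlmostSub

namespace Nat

variable {a : Set ℕ}

theorem image_nth_subset (ha : a.Infinite) (b : Set ℕ) : nth (· ∈ a) '' b ⊆ a := by
  rintro _ ⟨n, -, rfl⟩
  exact nth_mem_of_infinite ha n

theorem infinite_image_nth (ha : a.Infinite) {b : Set ℕ} (hb : b.Infinite) :
    (nth (· ∈ a) '' b).Infinite :=
  hb.image (nth_injective ha).injOn

theorem infinite_diff_image_nth (ha : a.Infinite) {b : Set ℕ} (hb : bᶜ.Infinite) :
    (a \ nth (· ∈ a) '' b).Infinite :=
  (infinite_image_nth ha hb).mono fun _ hn =>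
    ⟨image_nth_subset ha _ (image_mono (subset_univ _) hn),
      image_compl_subset (nth_injective ha) hn⟩

end Nat

def prefixCodes (x : ℕ → Bool) : Set ℕ :=
  range fun n => Encodable.encode (List.ofFn fun i : Fin n => x i)

theorem prefixCodes_infinite (x : ℕ → Bool) : (prefixCodes x).Infinite :=
  infinite_range_of_injective fun n m h => by
    simpa using congrArg List.length (Encodable.encode_injective h)

theorem prefixCodes_inter_finite {x y : ℕ → Bool} (hxy : x ≠ y) :
    (prefixCodes x ∩ prefixCodes y).Finite := by
  obtain ⟨k, hk⟩ := Function.ne_iff.mp hxy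
  refine ((finite_Iic k).image fun n => Encodable.encode (List.ofFn fun i : Fin n => x i)).subset ?_
  rintro _ ⟨⟨n, rfl⟩, m, hmn⟩
  have hl := Encodable.encode_injective hmn
  obtain rfl : m = n := by simpa using congrArg List.length hl
  refine ⟨m, mem_Iic.mpr (not_lt.mp fun hkm : k < m => hk ?_), rfl⟩
  simpa using (congrFun (List.ofFn_injective hl) ⟨k, hkm⟩).symm

theorem compl_prefixCodes_infinite (x : ℕ → Bool) : (prefixCodes x)ᶜ.Infinite := by
  have hne : (fun n => !x n) ≠ x := fun h => by simpa using congrFun h 0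
  exact ((prefixCodes_infinite _).sdiff (prefixCodes_inter_finite hne)).mono fun n hn =>
    fun hx => hn.2 ⟨hn.1, hx⟩

theorem Set.Infinite.exists_subset_infinite_diff {x : Set ℕ} (hx : x.Infinite) :
    ∃ S ⊆ x, S.Infinite ∧ (x \ S).Infinite :=
  ⟨_, Nat.image_nth_subset hx (prefixCodes default),
    Nat.infinite_image_nth hx (prefixCodes_infinite _),
    Nat.infinite_diff_image_nth hx (compl_prefixCodes_infinite _)⟩

theorem pNum_le_continuum : pNum ≤ 𝔠 := by
  let U := Filter.hyperfilter ℕ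
  suffices pNum ≤ #{a : Set ℕ | a ∈ U} from this.trans ((mk_set_le _).trans_eq mk_set_nat)
  refine csInf_le' ⟨_, rfl, fun s hs hfin => ?_, ?_⟩
  · exact Filter.notMem_hyperfilter_of_finite hfin ((Filter.biInter_finset_mem s).mpr hs)
  · rintro ⟨x, hx, hxU⟩
    obtain ⟨S, hSx, hS, hxS⟩ := hx.exists_subset_infinite_diff
    rcases U.mem_or_compl_mem S with hSU | hSU
    · exact hxS (hxU S hSU)
    · exact hS ((hxU _ hSU).subset fun n hn => ⟨hSx hn, not_not.mpr hn⟩)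

theorem exists_infinite_almostSub_of_mk_lt_pNum {B : Set (Set ℕ)} (hcard : #B < pNum)
    (hinter : ∀ s : Finset (Set ℕ), ↑s ⊆ B → (⋂ a ∈ s, a).Infinite) :
    ∃ x : Set ℕ, x.Infinite ∧ ∀ a ∈ B, AlmostSub x a := by
  by_contra h
  exact (csInf_le' ⟨B, rfl, hinter, h⟩ : pNum ≤ #B).not_gt hcard

theorem exists_infinite_almostSub_of_card_lt_pNum {δ : Ordinal.{0}} (hδ : δ.card < pNum)
    {g : Ordinal → Set ℕ} (hg : ∀ β < δ, (g β).Infinite)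
    (hanti : ∀ γ β, γ ≤ β → β < δ → AlmostSub (g β) (g γ)) :
    ∃ x : Set ℕ, x.Infinite ∧ ∀ β < δ, AlmostSub x (g β) := by
  have hcard : #(g '' Iio δ) < pNum := by
    refine lt_of_le_of_lt ?_ hδ
    have := mk_image_le_lift (f := g) (s := Iio δ)
    rwa [lift_uzero, mk_Iio_ordinal, lift_le] at this
  have hinter : ∀ s : Finset (Set ℕ), ↑s ⊆ g '' Iio δ → (⋂ a ∈ s, a).Infinite := by
    intro s hs
    rcases s.eq_empty_or_nonempty with rfl | hne
    · simpa using infinite_univ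
    choose! σ hσδ hσ using fun a (ha : a ∈ s) => hs ha
    obtain ⟨a, ha, hmax⟩ := s.exists_max_image σ hne
    refine (AlmostSub.biInter_finset fun b hb => ?_).infinite (hg _ (hσδ a ha))
    rw [← hσ b hb]
    exact hanti _ _ (hmax b hb) (hσδ a ha)
  obtain ⟨x, hx, hxg⟩ := exists_infinite_almostSub_of_mk_lt_pNum hcard hinter
  exact ⟨x, hx, fun β hβ => hxg _ (mem_image_of_mem g hβ)⟩

theorem exists_almostDisjoint_family {κ : Cardinal.{0}} (hκ : κ ≤ 𝔠) :
    ∃ A : Ordinal → Set ℕ, (∀ α, (A α).Infinite) ∧ (∀ α, (A α)ᶜ.Infinite) ∧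
      ∀ α < κ.ord, ∀ β < κ.ord, α ≠ β → (A α ∩ A β).Finite := by
  classical
  obtain ⟨e⟩ : Nonempty (Iio κ.ord ↪ (ℕ → Bool)) := by
    rw [← lift_mk_le', mk_Iio_ordinal, card_ord, lift_lift, lift_le, ← power_def, mk_bool,
      mk_nat, two_power_aleph0]
    exact hκ
  refine ⟨fun α => if h : α < κ.ord then prefixCodes (e ⟨α, h⟩) else prefixCodes default,
    fun α => ?_, fun α => ?_, fun α hα β hβ hne => ?_⟩
  · dsimp only
    split_ifs <;> exact prefixCodes_infinite _
  · dsimp only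
    split_ifs <;> exact compl_prefixCodes_infinite _
  · simp only [dif_pos hα, dif_pos hβ]
    exact prefixCodes_inter_finite fun h => hne (congrArg Subtype.val (e.injective h))

section Tower

variable (A : Ordinal → Set ℕ) (f : Ordinal → Ordinal)

/-- At a limit `δ`, `Classical.epsilon` picks an arbitrary set if the tower below `δ` has no
infinite pseudo-intersection; `tower_spec` shows that it has one as long as `δ.card < 𝔭`. -/
noncomputable def tower (δ : Ordinal.{0}) : Set ℕ :=
  Ordinal.limitRecOn δ Set.univ (fun β a => Nat.nth (· ∈ a) '' A (f β)) fun δ _ t =>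
    Classical.epsilon fun x : Set ℕ => x.Infinite ∧ ∀ β (hβ : β < δ), AlmostSub x (t β hβ)

theorem tower_zero : tower A f 0 = Set.univ := Ordinal.limitRecOn_zero ..

theorem tower_add_one (β : Ordinal) :
    tower A f (β + 1) = Nat.nth (· ∈ tower A f β) '' A (f β) :=
  Ordinal.limitRecOn_add_one ..

theorem tower_limit {δ : Ordinal} (hδ : Order.IsSuccLimit δ) :
    tower A f δ = Classical.epsilon fun x : Set ℕ =>
      x.Infinite ∧ ∀ β < δ, AlmostSub x (tower A f β) :=
  Ordinal.limitRecOn_limit _ _ _ _ hδ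

theorem tower_congr {g : Ordinal → Ordinal} {δ : Ordinal} (hfg : ∀ β < δ, f β = g β) :
    tower A f δ = tower A g δ := by
  induction δ using Ordinal.limitRecOn with
  | zero => rw [tower_zero, tower_zero]
  | add_one β ih =>
    have hβ : β < β + 1 := Order.lt_add_one_iff.mpr le_rfl
    rw [tower_add_one, tower_add_one, ih fun γ hγ => hfg γ (hγ.trans hβ), hfg β hβ]
  | limit δ hδ ih =>
    rw [tower_limit A f hδ, tower_limit A g hδ]
    congr! 5 with x β hβ
    rw [ih β hβ fun γ hγ => hfg γ (hγ.trans hβ)]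

theorem tower_spec (hA : ∀ α, (A α).Infinite) (hAc : ∀ α, (A α)ᶜ.Infinite) {δ : Ordinal}
    (hδ : δ.card < pNum) : (tower A f δ).Infinite ∧ ∀ β < δ,
      AlmostSub (tower A f δ) (tower A f β) ∧ ¬ AlmostSub (tower A f β) (tower A f δ) := by
  induction δ using Ordinal.limitRecOn with
  | zero => exact ⟨tower_zero A f ▸ infinite_univ, fun β hβ => (not_lt_bot hβ).elim⟩
  | add_one β ih =>
    have hβ : β < β + 1 := Order.lt_add_one_iff.mpr le_rfl
    obtain ⟨hinf, hlt⟩ := ih ((Ordinal.card_le_card hβ.le).trans_lt hδ)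
    have hsub : tower A f (β + 1) ⊆ tower A f β :=
      tower_add_one A f β ▸ Nat.image_nth_subset hinf _
    refine ⟨tower_add_one A f β ▸ Nat.infinite_image_nth hinf (hA _), fun γ hγ => ?_⟩
    rcases (Order.lt_add_one_iff.mp hγ).lt_or_eq with hγ | rfl
    · exact ⟨(AlmostSub.of_subset hsub).trans (hlt γ hγ).1,
        fun h => (hlt γ hγ).2 (h.trans (AlmostSub.of_subset hsub))⟩
    · exact ⟨AlmostSub.of_subset hsub,
        tower_add_one A f γ ▸ Nat.infinite_diff_image_nth hinf (hAc _)⟩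
  | limit δ hlim ih =>
    replace ih := fun β (hβ : β < δ) => ih β hβ ((Ordinal.card_le_card hβ.le).trans_lt hδ)
    obtain ⟨hinf, hsub⟩ :
        (tower A f δ).Infinite ∧ ∀ β < δ, AlmostSub (tower A f δ) (tower A f β) := by
      rw [tower_limit A f hlim]
      refine Classical.epsilon_spec (exists_infinite_almostSub_of_card_lt_pNum hδ
        (fun β hβ => (ih β hβ).1) fun γ β hγβ hβ => ?_)
      rcases hγβ.lt_or_eq with hγβ | rfl
      · exact ((ih β hβ).2 γ hγβ).1
      · exact AlmostSub.refl _
    refine ⟨hinf, fun β hβ => ⟨hsub β hβ, fun h => ?_⟩⟩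
    have hβ1 := hlim.add_one_lt hβ
    exact ((ih _ hβ1).2 β (Order.lt_add_one_iff.mpr le_rfl)).2 (h.trans (hsub _ hβ1))

theorem tower_almostSub_of_le (hA : ∀ α, (A α).Infinite)
    (hAc : ∀ α, (A α)ᶜ.Infinite) {γ δ : Ordinal} (hγδ : γ ≤ δ) (hδ : δ.card < pNum) :
    AlmostSub (tower A f δ) (tower A f γ) := by
  rcases hγδ.lt_or_eq with hγδ | rfl
  · exact ((tower_spec A f hA hAc hδ).2 γ hγδ).1
  · exact AlmostSub.refl _

theorem tower_inter_finite (hA : ∀ α, (A α).Infinite) (hAc : ∀ α, (A α)ᶜ.Infinite)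
    {f g : Ordinal → Ordinal} {β δ₁ δ₂ : Ordinal} (hβ₁ : β < δ₁) (hβ₂ : β < δ₂)
    (hδ₁ : δ₁.card < pNum) (hδ₂ : δ₂.card < pNum) (hfg : ∀ γ < β, f γ = g γ)
    (hAfg : (A (f β) ∩ A (g β)).Finite) : (tower A f δ₁ ∩ tower A g δ₂).Finite := by
  have hinf : (tower A f β).Infinite :=
    (tower_spec A f hA hAc ((Ordinal.card_le_card hβ₁.le).trans_lt hδ₁)).1
  refine AlmostSub.inter_finite
    (tower_almostSub_of_le A f hA hAc (Order.add_one_le_iff.mpr hβ₁) hδ₁)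
    (tower_almostSub_of_le A g hA hAc (Order.add_one_le_iff.mpr hβ₂) hδ₂) ?_
  rw [tower_add_one, tower_add_one, ← tower_congr A f hfg,
    ← image_inter (Nat.nth_injective (p := (· ∈ tower A f β)) hinf)]
  exact hAfg.image _

end Tower

theorem XSeq.exists_first_difference {ξ : Cardinal} {s t : XSeq ξ} (hlen : s.len ≤ t.len)
    (hst : ¬ seqExt s t) : ∃ β < s.len, s.f β ≠ t.f β ∧ ∀ γ < β, s.f γ = t.f γ := by
  have hex : {β | β < s.len ∧ s.f β ≠ t.f β}.Nonempty := by
    by_contra! h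
    exact hst ⟨hlen, fun β hβ => by_contra fun hne => h.subset ⟨hβ, Ne.symm hne⟩⟩
  obtain ⟨β, ⟨hβ, hne⟩, hmin⟩ := wellFounded_lt.has_min _ hex
  exact ⟨β, hβ, hne, fun γ hγ => by_contra fun hne' => hmin γ ⟨hγ.trans hβ, hne'⟩ hγ⟩

theorem stmt17_general (ξ : Cardinal) (hp : ξ ≤ pNum) :
    ∃ F : XSeq ξ → Set ℕ,
      (∀ s, (F s).Infinite) ∧
      (∀ s t, seqExt s t → s.len < t.len →
        AlmostSub (F t) (F s) ∧ ¬ AlmostSub (F s) (F t)) ∧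
      (∀ s t, ¬ seqExt s t → ¬ seqExt t s → (F s ∩ F t).Finite) := by
  obtain ⟨A, hA, hAc, hAD⟩ := exists_almostDisjoint_family (hp.trans pNum_le_continuum)
  have hcard (s : XSeq ξ) : s.len.card < pNum := (lt_ord.mp s.len_lt).trans_le hp
  have incomparable (s t : XSeq ξ) (hlen : s.len ≤ t.len) (hst : ¬ seqExt s t) :
      (tower A s.f s.len ∩ tower A t.f t.len).Finite := by
    obtain ⟨β, hβ, hne, hagree⟩ := XSeq.exists_first_difference hlen hst
    have hβ' := hβ.trans_le hlen
    exact tower_inter_finite A hA hAc hβ hβ' (hcard s) (hcard t) hagree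
      (hAD _ (s.f_lt β hβ) _ (t.f_lt β hβ') hne)
  refine ⟨fun s => tower A s.f s.len, fun s => (tower_spec A s.f hA hAc (hcard s)).1,
    fun s t hst hlt => ?_, fun s t hst hts => ?_⟩
  · dsimp only
    rw [← tower_congr A t.f hst.2]
    exact (tower_spec A t.f hA hAc (hcard t)).2 s.len hlt
  · rcases le_total s.len t.len with h | h
    · exact incomparable s t h hst
    · exact inter_comm (tower A t.f t.len) _ ▸ incomparable t s h hts

/-- If 𝔭 ≥ ξ (ξ regular uncountable), there is an embedding of the tree
`(ξ^{<ξ}, ⊊)` into `([ω]^{ℵ₀}, ⊋*)` preserving strict order and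
incompatibility. -/
theorem stmt17 (ξ : Cardinal) (hreg : ξ.IsRegular) (hunc : ℵ₀ < ξ)
    (hp : ξ ≤ pNum) :
    ∃ F : XSeq ξ → Set ℕ,
      (∀ s, (F s).Infinite) ∧
      (∀ s t, seqExt s t → s.len < t.len →
        AlmostSub (F t) (F s) ∧ ¬ AlmostSub (F s) (F t)) ∧
      (∀ s t, ¬ seqExt s t → ¬ seqExt t s → (F s ∩ F t).Finite) :=
  stmt17_general ξ hp
end

section
/- ZFC proves: there are no three indices k₁ < k₂ < k₃ with ℵ₁ < 𝔪(k₁-Knaster) < 𝔪(k₂-Knaster) < 𝔪(k₃-Knaster). More precisely: if 𝔪(k-Knaster) > ℵ₁ for some k ≥ 1, then 𝔪(ℓ-Knaster) = 𝔪(k-Knaster) = 𝔪(precaliber) for all ℓ ≥ k. Equivalently, there is a unique 1 ≤ k* ≤ ω and (if k* < ω) a unique λ > ℵ₁ such that 𝔪(ℓ-Knaster) = ℵ₁ for ℓ < k* and 𝔪(ℓ-Knaster) = λ for ℓ ≥ k*. -/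
open Cardinal

/-- ccc: every antichain is countable. -/
def IsCccR (Q : Type) (le : Q → Q → Prop) : Prop :=
  ∀ A : Set Q, (∀ a ∈ A, ∀ b ∈ A, a ≠ b → ¬ ∃ c, le c a ∧ le c b) → A.Countable

/-- `B` is k-linked. -/
def LinkedK (Q : Type) (le : Q → Q → Prop) (k : ℕ) (B : Set Q) : Prop :=
  ∀ s : Finset Q, ↑s ⊆ B → s.card = k → ∃ q, ∀ b ∈ s, le q b

/-- The class of k-Knaster posets (1-Knaster means ccc, by convention). -/
def IsKnR (k : ℕ) (Q : Type) (le : Q → Q → Prop) : Prop :=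
  if k = 1 then IsCccR Q le
  else ∀ A : Set Q, #A = Cardinal.aleph 1 →
    ∃ B ⊆ A, #B = Cardinal.aleph 1 ∧ LinkedK Q le k B

/-- The class of posets with precaliber ℵ₁. -/
def IsPrecalR (Q : Type) (le : Q → Q → Prop) : Prop :=
  ∀ A : Set Q, #A = Cardinal.aleph 1 →
    ∃ B ⊆ A, #B = Cardinal.aleph 1 ∧
      ∀ s : Finset Q, ↑s ⊆ B → ∃ q, ∀ b ∈ s, le q b

/-- The Martin number 𝔪(C) of a class C of preordered sets: the least κ such
that for some poset in C there are κ many dense sets not met by any filter. -/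
noncomputable def mNum (C : (Q : Type) → (Q → Q → Prop) → Prop) : Cardinal :=
  sInf {c | ∃ (Q : Type) (le : Q → Q → Prop),
    Nonempty Q ∧ (∀ a, le a a) ∧ (∀ a b d, le a b → le b d → le a d) ∧ C Q le ∧
    ∃ 𝒟 : Set (Set Q), #𝒟 = c ∧ (∀ D ∈ 𝒟, DenseIn le D) ∧
      ¬ ∃ G, IsFilterIn le G ∧ ∀ D ∈ 𝒟, (G ∩ D).Nonempty}

/-! ### Auxiliary definitions and lemmas -/

/-- The "obstruction set" whose infimum is `mNum C`. -/
def ObSet (C : (Q : Type) → (Q → Q → Prop) → Prop) : Set Cardinal :=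
  {c | ∃ (Q : Type) (le : Q → Q → Prop),
    Nonempty Q ∧ (∀ a, le a a) ∧ (∀ a b d, le a b → le b d → le a d) ∧ C Q le ∧
    ∃ 𝒟 : Set (Set Q), #𝒟 = c ∧ (∀ D ∈ 𝒟, DenseIn le D) ∧
      ¬ ∃ G, IsFilterIn le G ∧ ∀ D ∈ 𝒟, (G ∩ D).Nonempty}

lemma mNum_def (C : (Q : Type) → (Q → Q → Prop) → Prop) : mNum C = sInf (ObSet C) := rfl

/-! #### The Cohen poset: witnesses that all obstruction sets are nonempty -/

/-- The Cohen order on finite binary sequences: `p` is stronger than `q` iff `q` is a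
prefix of `p`. -/
def cohenLe (p q : List Bool) : Prop := q <+: p

/-- The dense set of conditions disagreeing somewhere with `f`. -/
def cohenE (f : ℕ → Bool) : Set (List Bool) := {p | ∃ i, ∃ h : i < p.length, p[i] ≠ f i}

lemma cohen_dense (f : ℕ → Bool) : DenseIn cohenLe (cohenE f) := by
  intro p
  refine ⟨p ++ [!f p.length], ⟨p.length, by simp, ?_⟩, List.prefix_append _ _⟩
  simp

lemma cohen_nofilter :
    ¬ ∃ G, IsFilterIn cohenLe G ∧ ∀ D ∈ Set.range cohenE, (G ∩ D).Nonempty := by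
  classical
  rintro ⟨G, ⟨hne, hup, hdir⟩, hmeet⟩
  set g : ℕ → Bool := fun n =>
    if h : ∃ p ∈ G, n < p.length then h.choose[n]'(h.choose_spec.2) else false with hg
  have key : ∀ p ∈ G, ∀ i, ∀ hi : i < p.length, p[i] = g i := by
    intro p hp i hi
    have h : ∃ p ∈ G, i < p.length := ⟨p, hp, hi⟩
    have hgi : g i = h.choose[i]'(h.choose_spec.2) := by
      rw [hg]; exact dif_pos h
    obtain ⟨hqG, hqlen⟩ := h.choose_spec
    obtain ⟨r, hrG, hrp, hrq⟩ := hdir p hp _ hqG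
    -- hrp : cohenLe r p, i.e., p <+: r
    have e1 : p[i] = r[i]'(lt_of_lt_of_le hi hrp.length_le) := hrp.getElem hi
    have e2 : h.choose[i]'hqlen = r[i]'(lt_of_lt_of_le hqlen hrq.length_le) := hrq.getElem hqlen
    rw [hgi]
    exact e1.trans e2.symm
  obtain ⟨p, hpG, i, hi, hne'⟩ := hmeet (cohenE g) ⟨g, rfl⟩
  exact hne' (key p hpG i hi)

lemma cohen_ObSet (C : (Q : Type) → (Q → Q → Prop) → Prop)
    (hC : C (List Bool) cohenLe) : (ObSet C).Nonempty := by
  refine ⟨#(Set.range cohenE), List Bool, cohenLe, ⟨[]⟩, ?_, ?_, hC,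
    Set.range cohenE, rfl, ?_, cohen_nofilter⟩
  · intro p; exact List.prefix_rfl
  · intro p q r hpq hqr; exact List.IsPrefix.trans hqr hpq
  · rintro _ ⟨f, rfl⟩; exact cohen_dense f

lemma cohen_ccc : IsCccR (List Bool) cohenLe := fun A _ => A.to_countable

lemma cohen_knR (k : ℕ) : IsKnR k (List Bool) cohenLe := by
  unfold IsKnR
  split
  · exact cohen_ccc
  · intro A hA
    have h1 : #A ≤ ℵ₀ := Cardinal.mk_le_aleph0
    rw [hA] at h1
    exact absurd h1 (not_le.mpr aleph0_lt_aleph_one)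

lemma cohen_precal : IsPrecalR (List Bool) cohenLe := by
  intro A hA
  have h1 : #A ≤ ℵ₀ := Cardinal.mk_le_aleph0
  rw [hA] at h1
  exact absurd h1 (not_le.mpr aleph0_lt_aleph_one)

/-! #### Generalities about the classes -/

lemma infinite_of_mk_aleph1 {α : Type} {A : Set α} (hA : #A = aleph 1) : A.Infinite :=
  Set.infinite_coe_iff.mp (Cardinal.infinite_iff.mpr (by rw [hA]; exact aleph0_le_aleph 1))

lemma exists_aleph1_subset {α : Type} {A : Set α} (h : ¬ A.Countable) :
    ∃ B ⊆ A, #B = aleph 1 := by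
  rw [← Set.countable_coe_iff, ← Cardinal.mk_le_aleph0_iff, not_le] at h
  have h2 : aleph 1 ≤ #A :=
    le_trans (le_of_eq Cardinal.succ_aleph0.symm) (Order.succ_le_of_lt h)
  exact Cardinal.le_mk_iff_exists_subset.mp h2

lemma knR_ccc {k : ℕ} (hk : 1 ≤ k) {Q : Type} {le : Q → Q → Prop} (h : IsKnR k Q le) :
    IsCccR Q le := by
  unfold IsKnR at h
  split at h
  · exact h
  · rename_i hk1
    intro A hA
    by_contra hA'
    obtain ⟨A', hA'A, hA'card⟩ := exists_aleph1_subset hA'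
    obtain ⟨B, hBA', hBcard, hBlink⟩ := h A' hA'card
    obtain ⟨s, hsB, hscard⟩ := (infinite_of_mk_aleph1 hBcard).exists_subset_card_eq k
    obtain ⟨a, ha, b, hb, hab⟩ := Finset.one_lt_card.mp (show 1 < s.card by omega)
    obtain ⟨q, hq⟩ := hBlink s hsB hscard
    exact hA a (hA'A (hBA' (hsB ha))) b (hA'A (hBA' (hsB hb))) hab ⟨q, hq a ha, hq b hb⟩

lemma knR_mono {k l : ℕ} (hk : 1 ≤ k) (hkl : k ≤ l) {Q : Type} {le : Q → Q → Prop}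
    (h : IsKnR l Q le) : IsKnR k Q le := by
  classical
  unfold IsKnR
  split
  · exact knR_ccc (le_trans hk hkl) h
  · rename_i hk1
    intro A hA
    have hl1 : l ≠ 1 := by omega
    unfold IsKnR at h
    rw [if_neg hl1] at h
    obtain ⟨B, hBA, hBcard, hBlink⟩ := h A hA
    refine ⟨B, hBA, hBcard, ?_⟩
    intro s hsB hscard
    have hinf := infinite_of_mk_aleph1 hBcard
    obtain ⟨t, htB, htcard⟩ := (hinf.diff s.finite_toSet).exists_subset_card_eq (l - k)
    have hdisj : Disjoint s t :=
      Finset.disjoint_left.mpr fun x hxs hxt => (htB hxt).2 hxs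
    have hsub : ↑(s ∪ t) ⊆ B := by
      rw [Finset.coe_union]
      exact Set.union_subset hsB (fun x hx => (htB hx).1)
    have hucard : (s ∪ t).card = l := by
      rw [Finset.card_union_of_disjoint hdisj, hscard, htcard]; omega
    obtain ⟨q, hq⟩ := hBlink (s ∪ t) hsub hucard
    exact ⟨q, fun b hb => hq b (Finset.mem_union_left _ hb)⟩

lemma precal_knR {l : ℕ} (hl : 1 ≤ l) {Q : Type} {le : Q → Q → Prop}
    (h : IsPrecalR Q le) : IsKnR l Q le := by
  unfold IsKnR
  split
  · intro A hA
    by_contra hA'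
    obtain ⟨A', hA'A, hA'card⟩ := exists_aleph1_subset hA'
    obtain ⟨B, hBA', hBcard, hBcent⟩ := h A' hA'card
    obtain ⟨s, hsB, hscard⟩ := (infinite_of_mk_aleph1 hBcard).exists_subset_card_eq 2
    obtain ⟨a, ha, b, hb, hab⟩ := Finset.one_lt_card.mp (show 1 < s.card by omega)
    obtain ⟨q, hq⟩ := hBcent s hsB
    exact hA a (hA'A (hBA' (hsB ha))) b (hA'A (hBA' (hsB hb))) hab ⟨q, hq a ha, hq b hb⟩
  · intro A hA
    obtain ⟨B, hBA, hBcard, hBcent⟩ := h A hA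
    exact ⟨B, hBA, hBcard, fun s hs _ => hBcent s hs⟩

lemma ObSet_mono {C₁ C₂ : (Q : Type) → (Q → Q → Prop) → Prop}
    (h : ∀ Q le, C₁ Q le → C₂ Q le) : ObSet C₁ ⊆ ObSet C₂ := by
  rintro c ⟨Q, le, hn, h1, h2, h3, rest⟩
  exact ⟨Q, le, hn, h1, h2, h Q le h3, rest⟩

lemma mNum_mono {C₁ C₂ : (Q : Type) → (Q → Q → Prop) → Prop}
    (h : ∀ Q le, C₁ Q le → C₂ Q le) (hne : (ObSet C₁).Nonempty) : mNum C₂ ≤ mNum C₁ :=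
  csInf_le_csInf (OrderBot.bddBelow _) hne (ObSet_mono h)

/-! #### Restriction of a k-Knaster order below a condition -/

lemma knR_restrict {k : ℕ} (hk : 1 ≤ k) {Q : Type} {le : Q → Q → Prop}
    (htrans : ∀ a b d, le a b → le b d → le a d) (h : IsKnR k Q le) (p₀ : Q) :
    IsKnR k {q : Q // le q p₀} (fun a b => le a.1 b.1) := by
  classical
  have hccc := knR_ccc hk h
  unfold IsKnR
  split
  · intro A hA
    have h1 : (Subtype.val '' A).Countable := by
      apply hccc
      rintro _ ⟨a, haA, rfl⟩ _ ⟨b, hbA, rfl⟩ hne ⟨c, hca, hcb⟩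
      refine hA a haA b hbA (fun e => hne (by rw [e])) ?_
      exact ⟨⟨c, htrans _ _ _ hca a.2⟩, hca, hcb⟩
    have h2 := h1.preimage (Subtype.val_injective (p := fun q => le q p₀))
    exact h2.mono (Set.subset_preimage_image _ _)
  · rename_i hk1
    unfold IsKnR at h
    rw [if_neg hk1] at h
    intro A hA
    have hAv : #(Subtype.val '' A) = aleph 1 := by
      rw [Cardinal.mk_image_eq Subtype.val_injective]; exact hA
    obtain ⟨B, hBA, hBcard, hBlink⟩ := h _ hAv
    refine ⟨Subtype.val ⁻¹' B, ?_, ?_, ?_⟩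
    · intro x hx
      obtain ⟨a, haA, hax⟩ := hBA hx
      rwa [← Subtype.val_injective hax]
    · have himg : Subtype.val '' (Subtype.val ⁻¹' B) = B :=
        Set.image_preimage_eq_of_subset (hBA.trans (Set.image_subset_range _ _))
      have hm := Cardinal.mk_image_eq (f := Subtype.val) (s := Subtype.val ⁻¹' B)
        (Subtype.val_injective (p := fun q => le q p₀))
      rw [himg] at hm
      exact hm.symm.trans hBcard
    · intro s hs hscard
      set s' : Finset Q := s.image Subtype.val with hs'
      have hs'B : ↑s' ⊆ B := by
        intro x hx
        rw [hs', Finset.coe_image] at hx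
        obtain ⟨b, hb, rfl⟩ := hx
        exact hs hb
      have hs'card : s'.card = k := by
        rw [hs', Finset.card_image_of_injective _ Subtype.val_injective, hscard]
      obtain ⟨q, hq⟩ := hBlink s' hs'B hs'card
      obtain ⟨b₀, hb₀⟩ := Finset.card_pos.mp (show 0 < s.card by omega)
      have hqp₀ : le q p₀ :=
        htrans _ _ _ (hq b₀.1 (Finset.mem_image_of_mem _ hb₀)) b₀.2
      exact ⟨⟨q, hqp₀⟩, fun b hb => hq b.1 (Finset.mem_image_of_mem _ hb)⟩

/-! #### ω₁ facts -/

lemma countable_Iio_omega1 (x : (aleph 1).ord.ToType) : (Set.Iio x).Countable := by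
  haveI : IsWellOrder (aleph 1).ord.ToType (· < ·) := isWellOrder_lt
  rw [← Set.countable_coe_iff, ← Cardinal.mk_le_aleph0_iff]
  have h1 : #{y : (aleph 1).ord.ToType // y < x} =
      ((Ordinal.typein ((· < ·) : (aleph 1).ord.ToType → (aleph 1).ord.ToType → Prop)).toRelEmbedding x).card :=
    Ordinal.card_typein x
  have h2 := Ordinal.typein_lt_type ((· < ·) : (aleph 1).ord.ToType → (aleph 1).ord.ToType → Prop) x
  rw [Ordinal.type_toType, Cardinal.lt_ord] at h2
  rw [← h1] at h2
  have h2' : #{y : (aleph 1).ord.ToType // y < x} < Order.succ ℵ₀ :=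
    h2.trans_eq Cardinal.succ_aleph0.symm
  have h3 : #(Set.Iio x) = #{y : (aleph 1).ord.ToType // y < x} := rfl
  exact Order.lt_succ_iff.mp (h3.trans_lt h2')

lemma bounded_of_countable_omega1 {S : Set ((aleph 1).ord.ToType)} (h : S.Countable) :
    ∃ x, ∀ s ∈ S, s < x := by
  haveI : IsWellOrder (aleph 1).ord.ToType (· < ·) := isWellOrder_lt
  by_contra hne
  push_neg at hne
  have hcof := Order.cof_le (α := (aleph 1).ord.ToType) (s := S) (fun a => hne a)
  rw [Ordinal.cof_toType, Cardinal.isRegular_aleph_one.cof_eq] at hcof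
  exact absurd (lt_of_le_of_lt (Cardinal.mk_le_aleph0_iff.mpr (Set.countable_coe_iff.mpr h))
    aleph0_lt_aleph_one) (not_lt.mpr hcof)

lemma mk_omega1 : #((aleph 1).ord.ToType) = aleph 1 := by
  rw [Cardinal.mk_toType, Cardinal.card_ord]

/-! #### Common lower bounds from filters -/

lemma filter_finset_lb {Q : Type} {le : Q → Q → Prop}
    (htrans : ∀ a b d, le a b → le b d → le a d)
    {Q' : Type} (v : Q' → Q) {le' : Q' → Q' → Prop}
    (hv : ∀ x y, le' x y → le (v x) (v y))
    {G : Set Q'} (hG : IsFilterIn le' G) (s : Finset Q)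
    (hs : ∀ b ∈ s, ∃ q ∈ G, le (v q) b) : ∃ r ∈ G, ∀ b ∈ s, le (v r) b := by
  classical
  induction s using Finset.induction_on with
  | empty =>
    obtain ⟨g, hg⟩ := hG.1
    exact ⟨g, hg, by simp⟩
  | insert _ _ hb ih =>
    rename_i b t
    obtain ⟨r, hrG, hr⟩ := ih (fun x hx => hs x (Finset.mem_insert_of_mem hx))
    obtain ⟨q, hqG, hq⟩ := hs b (Finset.mem_insert_self _ _)
    obtain ⟨r', hr'G, hr'r, hr'q⟩ := hG.2.2 r hrG q hqG
    refine ⟨r', hr'G, ?_⟩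
    intro x hx
    rcases Finset.mem_insert.mp hx with rfl | hx
    · exact htrans _ _ _ (hv _ _ hr'q) hq
    · exact htrans _ _ _ (hv _ _ hr'r) (hr x hx)

/-! #### The main lemma: MA(ℵ₁) for the k-Knaster class implies every k-Knaster
poset has precaliber ℵ₁. -/

lemma precal_of_MA {k : ℕ} (hk : 1 ≤ k) {Q : Type} {le : Q → Q → Prop}
    (hrefl : ∀ a, le a a) (htrans : ∀ a b d, le a b → le b d → le a d)
    (hC : IsKnR k Q le)
    (hMA : ∀ (Q' : Type) (le' : Q' → Q' → Prop), Nonempty Q' → (∀ a, le' a a) →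
      (∀ a b d, le' a b → le' b d → le' a d) → IsKnR k Q' le' →
      ∀ 𝒟 : Set (Set Q'), #𝒟 ≤ aleph 1 → (∀ D ∈ 𝒟, DenseIn le' D) →
        ∃ G, IsFilterIn le' G ∧ ∀ D ∈ 𝒟, (G ∩ D).Nonempty) :
    IsPrecalR Q le := by
  classical
  intro A hA
  obtain ⟨e⟩ : Nonempty ((aleph 1).ord.ToType ≃ A) := Cardinal.eq.mp (by rw [mk_omega1, hA])
  set a : (aleph 1).ord.ToType → Q := fun i => (e i).1 with ha
  have hainj : Function.Injective a := fun i j hij => e.injective (Subtype.ext hij)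
  set Scomp : Q → Set ((aleph 1).ord.ToType) := fun p => {i | ∃ c, le c p ∧ le c (a i)}
    with hScomp
  -- Step 1: find p₀ below which every condition is compatible with uncountably many aᵢ.
  have hp₀ : ∃ p₀ : Q, ∀ q, le q p₀ → ¬ (Scomp q).Countable := by
    by_contra hcon
    push_neg at hcon
    set 𝒜 : Set (Set Q) := {M : Set Q | (∀ m ∈ M, (Scomp m).Countable) ∧
        ∀ x ∈ M, ∀ y ∈ M, x ≠ y → ¬ ∃ c, le c x ∧ le c y} with h𝒜
    have hzorn : ∀ c ⊆ 𝒜, IsChain (· ⊆ ·) c → ∃ ub ∈ 𝒜, ∀ s ∈ c, s ⊆ ub := by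
      intro c hc hchain
      refine ⟨⋃₀ c, ⟨?_, ?_⟩, fun s hs => Set.subset_sUnion_of_mem hs⟩
      · rintro m ⟨M, hMc, hmM⟩
        exact (hc hMc).1 m hmM
      · rintro x ⟨Mx, hMxc, hxMx⟩ y ⟨My, hMyc, hyMy⟩ hxy
        rcases hchain.total hMxc hMyc with hle | hle
        · exact (hc hMyc).2 x (hle hxMx) y hyMy hxy
        · exact (hc hMxc).2 x hxMx y (hle hyMy) hxy
    obtain ⟨M, hM⟩ := zorn_subset 𝒜 hzorn
    have hMccc : M.Countable := knR_ccc hk hC M hM.prop.2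
    have hT : (⋃ m ∈ M, Scomp m).Countable := hMccc.biUnion (fun m hm => hM.prop.1 m hm)
    have hall : ∀ i : (aleph 1).ord.ToType, i ∈ ⋃ m ∈ M, Scomp m := by
      intro i
      obtain ⟨d, hd, hdc⟩ := hcon (a i)
      by_cases hcompat : ∃ m ∈ M, ∃ c, le c d ∧ le c m
      · obtain ⟨m, hm, c, hcd, hcm⟩ := hcompat
        exact Set.mem_biUnion hm ⟨c, hcm, htrans c d (a i) hcd hd⟩
      · have hdM : d ∉ M := fun hdm => hcompat ⟨d, hdm, d, hrefl d, hrefl d⟩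
        have hins : insert d M ∈ 𝒜 := by
          rw [h𝒜]
          constructor
          · intro m hm
            rcases Set.mem_insert_iff.mp hm with rfl | hm'
            · exact hdc
            · exact hM.prop.1 m hm'
          · intro x hx y hy hxy hexc
            obtain ⟨c, hc1, hc2⟩ := hexc
            rcases Set.mem_insert_iff.mp hx with rfl | hx'
            · rcases Set.mem_insert_iff.mp hy with rfl | hy'
              · exact absurd rfl hxy
              · exact hcompat ⟨y, hy', c, hc1, hc2⟩
            · rcases Set.mem_insert_iff.mp hy with rfl | hy'
              · exact hcompat ⟨x, hx', c, hc2, hc1⟩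
              · exact hM.prop.2 x hx' y hy' hxy ⟨c, hc1, hc2⟩
        have hsub := hM.2 hins (Set.subset_insert d M)
        exact absurd (hsub (Set.mem_insert d M)) hdM
    have huniv : (Set.univ : Set ((aleph 1).ord.ToType)).Countable :=
      hT.mono (fun i _ => hall i)
    have : #((aleph 1).ord.ToType) ≤ ℵ₀ :=
      Cardinal.mk_le_aleph0_iff.mpr (Set.countable_univ_iff.mp huniv)
    rw [mk_omega1] at this
    exact absurd this (not_le.mpr aleph0_lt_aleph_one)
  obtain ⟨p₀, hp₀⟩ := hp₀
  -- Step 2: the restricted poset and its dense sets.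
  have hC' : IsKnR k {q : Q // le q p₀} (fun x y => le x.1 y.1) := knR_restrict hk htrans hC p₀
  set D : (aleph 1).ord.ToType → Set {q : Q // le q p₀} :=
    fun i => {q | ∃ j, i ≤ j ∧ le q.1 (a j)} with hD
  have hdense : ∀ i, DenseIn (fun x y : {q : Q // le q p₀} => le x.1 y.1) (D i) := by
    intro i p
    have hS := hp₀ p.1 p.2
    have hex : ∃ j ∈ Scomp p.1, i ≤ j := by
      by_contra hcon
      push_neg at hcon
      exact hS ((countable_Iio_omega1 i).mono fun j hj => hcon j hj)
    obtain ⟨j, ⟨c, hcp, hca⟩, hij⟩ := hex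
    exact ⟨⟨c, htrans c p.1 p₀ hcp p.2⟩, ⟨j, hij, hca⟩, hcp⟩
  obtain ⟨G, hG, hmeet⟩ := hMA {q : Q // le q p₀} (fun x y => le x.1 y.1)
    ⟨⟨p₀, hrefl p₀⟩⟩ (fun x => hrefl x.1) (fun x y z h1 h2 => htrans _ _ _ h1 h2) hC'
    (Set.range D) (le_trans Cardinal.mk_range_le (le_of_eq mk_omega1))
    (by rintro _ ⟨i, rfl⟩; exact hdense i)
  -- Step 3: the set of indices hit by the filter is uncountable.
  set T : Set ((aleph 1).ord.ToType) := {j | ∃ q ∈ G, le q.1 (a j)} with hT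
  have hTunb : ∀ i, ∃ j ∈ T, i ≤ j := by
    intro i
    obtain ⟨q, hqG, j, hij, hqa⟩ := hmeet (D i) ⟨i, rfl⟩
    exact ⟨j, ⟨q, hqG, hqa⟩, hij⟩
  have hTuncount : ¬ T.Countable := by
    intro hc
    obtain ⟨x, hx⟩ := bounded_of_countable_omega1 hc
    obtain ⟨j, hjT, hxj⟩ := hTunb x
    exact absurd (hx j hjT) (not_lt.mpr hxj)
  have hTcard : #T = aleph 1 := by
    refine le_antisymm (le_trans (Cardinal.mk_set_le T) (le_of_eq mk_omega1)) ?_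
    refine le_trans (le_of_eq Cardinal.succ_aleph0.symm) ?_
    refine Order.succ_le_of_lt (lt_of_not_ge fun hle => hTuncount ?_)
    exact Set.countable_coe_iff.mp (Cardinal.mk_le_aleph0_iff.mp hle)
  refine ⟨a '' T, ?_, ?_, ?_⟩
  · rintro _ ⟨j, _, rfl⟩
    exact (e j).2
  · rw [Cardinal.mk_image_eq hainj]; exact hTcard
  · intro s hs
    have hsG : ∀ b ∈ s, ∃ q ∈ G, le q.1 b := by
      intro b hb
      obtain ⟨j, hjT, rfl⟩ := hs hb
      exact hjT
    obtain ⟨r, _, hr⟩ := filter_finset_lb htrans Subtype.val (fun x y h => h) hG s hsG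
    exact ⟨r.1, hr⟩

/-! ### The theorem -/

/-- If 𝔪(k-Knaster) > ℵ₁ then all 𝔪(ℓ-Knaster) for ℓ ≥ k agree with it, and
with 𝔪(precaliber); consequently there are no three Knaster numbers strictly
increasing above ℵ₁. -/
theorem stmt19 :
    (∀ k : ℕ, 1 ≤ k → Cardinal.aleph 1 < mNum (IsKnR k) →
      (∀ l, k ≤ l → mNum (IsKnR l) = mNum (IsKnR k)) ∧
      mNum (IsKnR k) = mNum IsPrecalR) ∧
    ¬ ∃ k₁ k₂ k₃ : ℕ, 1 ≤ k₁ ∧ k₁ < k₂ ∧ k₂ < k₃ ∧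
      Cardinal.aleph 1 < mNum (IsKnR k₁) ∧
      mNum (IsKnR k₁) < mNum (IsKnR k₂) ∧
      mNum (IsKnR k₂) < mNum (IsKnR k₃) := by
  have hKnNe : ∀ k : ℕ, (ObSet (IsKnR k)).Nonempty := fun k => cohen_ObSet _ (cohen_knR k)
  have hPrecalNe : (ObSet IsPrecalR).Nonempty := cohen_ObSet _ cohen_precal
  have main : ∀ k : ℕ, 1 ≤ k → Cardinal.aleph 1 < mNum (IsKnR k) →
      (∀ l, k ≤ l → mNum (IsKnR l) = mNum (IsKnR k)) ∧ mNum (IsKnR k) = mNum IsPrecalR := by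
    intro k hk h
    have hMA : ∀ (Q' : Type) (le' : Q' → Q' → Prop), Nonempty Q' → (∀ a, le' a a) →
        (∀ a b d, le' a b → le' b d → le' a d) → IsKnR k Q' le' →
        ∀ 𝒟 : Set (Set Q'), #𝒟 ≤ aleph 1 → (∀ D ∈ 𝒟, DenseIn le' D) →
          ∃ G, IsFilterIn le' G ∧ ∀ D ∈ 𝒟, (G ∩ D).Nonempty := by
      intro Q' le' hne h1 h2 h3 𝒟 hcard hdense
      by_contra hno
      have hmem : #𝒟 ∈ ObSet (IsKnR k) := ⟨Q', le', hne, h1, h2, h3, 𝒟, rfl, hdense, hno⟩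
      exact absurd (le_trans (csInf_le' hmem) hcard) (not_le.mpr h)
    have hwit : mNum (IsKnR k) ∈ ObSet (IsKnR k) := csInf_mem (hKnNe k)
    obtain ⟨Q, le, hQne, hrefl, htrans, hKn, 𝒟, hcard, hdense, hno⟩ := hwit
    have hPre : IsPrecalR Q le := precal_of_MA hk hrefl htrans hKn hMA
    have hmem : mNum (IsKnR k) ∈ ObSet IsPrecalR :=
      ⟨Q, le, hQne, hrefl, htrans, hPre, 𝒟, hcard, hdense, hno⟩
    have h1 : mNum IsPrecalR ≤ mNum (IsKnR k) := csInf_le' hmem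
    constructor
    · intro l hl
      have h3 : mNum (IsKnR k) ≤ mNum (IsKnR l) :=
        mNum_mono (fun Q le h => knR_mono hk hl h) (hKnNe l)
      have h4 : mNum (IsKnR l) ≤ mNum IsPrecalR :=
        mNum_mono (fun Q le h => precal_knR (le_trans hk hl) h) hPrecalNe
      exact le_antisymm (le_trans h4 h1) h3
    · refine le_antisymm ?_ h1
      exact mNum_mono (fun Q le h => precal_knR hk h) hPrecalNe
  refine ⟨main, ?_⟩
  rintro ⟨k₁, k₂, k₃, hk₁, h12, _, ha, hb, _⟩
  have heq := (main k₁ hk₁ ha).1 k₂ (le_of_lt h12)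
  rw [heq] at hb
  exact lt_irrefl _ hb
end
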